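/- arXiv:2004.01567 — 7 statements merged into one kernel-verified Lean document; each statement's English description precedes it below -/
import Mathlib

section
/- Let U ⊆ (0,∞) × ℝ be an open convex set and let P, Θ : U → ℝ be C¹ functions of (ρ,s) satisfying the Lagrangian condition (∂P/∂s)(ρ,s) = ρ²·(∂Θ/∂ρ)(ρ,s) on U. Then there exists a C² function ε : U → ℝ with ∂ε/∂s = Θ and ∂ε/∂ρ = P/ρ² on U; that is, every Lagrangian thermodynamic state satisfies the first law of thermodynamics dε = T ds + p ρ⁻² dρ for some specific energy ε. -/
/-!
The specific energy is a primitive of the 1-form `(P/ρ²) dρ + Θ ds`. The Lagrangian condition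
`P_s = ρ² Θ_ρ` says precisely that `∂_s (P/ρ²) = ∂_ρ Θ`, i.e. that this form is closed, and a
closed 1-form on a convex open set is exact (Poincaré lemma). The primitive is `C²` because its
derivative is the `C¹` form itself.
-/

/-- Partial derivative with respect to the first variable (the density `ρ`). -/
noncomputable def pderivR (f : ℝ → ℝ → ℝ) (r s : ℝ) : ℝ := deriv (fun x => f x s) r

/-- Partial derivative with respect to the second variable (the entropy `s`). -/
noncomputable def pderivS (f : ℝ → ℝ → ℝ) (r s : ℝ) : ℝ := deriv (fun y => f r y) s

open Function

noncomputable def planeForm (f g : ℝ × ℝ → ℝ) (q : ℝ × ℝ) : ℝ × ℝ →L[ℝ] ℝ :=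
  f q • ContinuousLinearMap.fst ℝ ℝ ℝ + g q • ContinuousLinearMap.snd ℝ ℝ ℝ

lemma contDiffOn_planeForm {f g : ℝ × ℝ → ℝ} {U : Set (ℝ × ℝ)} {n : WithTop ℕ∞}
    (hf : ContDiffOn ℝ n f U) (hg : ContDiffOn ℝ n g U) : ContDiffOn ℝ n (planeForm f g) U :=
  (hf.smul contDiffOn_const).add (hg.smul contDiffOn_const)

lemma fderiv_planeForm_apply {f g : ℝ × ℝ → ℝ} {q : ℝ × ℝ}
    (hf : DifferentiableAt ℝ f q) (hg : DifferentiableAt ℝ g q) (x y : ℝ × ℝ) :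
    fderiv ℝ (planeForm f g) q x y = fderiv ℝ f q x * y.1 + fderiv ℝ g q x * y.2 := by
  have h : HasFDerivAt (planeForm f g) ((fderiv ℝ f q).smulRight (ContinuousLinearMap.fst ℝ ℝ ℝ)
      + (fderiv ℝ g q).smulRight (ContinuousLinearMap.snd ℝ ℝ ℝ)) q :=
    (hf.hasFDerivAt.smul_const (ContinuousLinearMap.fst ℝ ℝ ℝ)).add
      (hg.hasFDerivAt.smul_const (ContinuousLinearMap.snd ℝ ℝ ℝ))
  simp [h.fderiv]

lemma ContinuousLinearMap.apply_eq_fst_mul_add_snd_mul (L : ℝ × ℝ →L[ℝ] ℝ) (x : ℝ × ℝ) :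
    L x = x.1 * L (1, 0) + x.2 * L (0, 1) := by
  obtain ⟨a, b⟩ := x
  have hab : ((a, b) : ℝ × ℝ) = a • ((1 : ℝ), (0 : ℝ)) + b • ((0 : ℝ), (1 : ℝ)) := by simp
  conv_lhs => rw [hab, map_add, map_smul, map_smul, smul_eq_mul, smul_eq_mul]

lemma fderiv_planeForm_symm {f g : ℝ × ℝ → ℝ} {q : ℝ × ℝ}
    (hf : DifferentiableAt ℝ f q) (hg : DifferentiableAt ℝ g q)
    (hclosed : fderiv ℝ f q (0, 1) = fderiv ℝ g q (1, 0)) (x y : ℝ × ℝ) :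
    fderiv ℝ (planeForm f g) q x y = fderiv ℝ (planeForm f g) q y x := by
  rw [fderiv_planeForm_apply hf hg, fderiv_planeForm_apply hf hg,
    (fderiv ℝ f q).apply_eq_fst_mul_add_snd_mul x, (fderiv ℝ f q).apply_eq_fst_mul_add_snd_mul y,
    (fderiv ℝ g q).apply_eq_fst_mul_add_snd_mul x, (fderiv ℝ g q).apply_eq_fst_mul_add_snd_mul y,
    hclosed]
  ring

theorem Convex.exists_contDiffOn_two_hasFDerivAt_planeForm {U : Set (ℝ × ℝ)} (hU : IsOpen U)
    (hconv : Convex ℝ U) {f g : ℝ × ℝ → ℝ} (hf : ContDiffOn ℝ 1 f U) (hg : ContDiffOn ℝ 1 g U)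
    (hclosed : ∀ q ∈ U, fderiv ℝ f q (0, 1) = fderiv ℝ g q (1, 0)) :
    ∃ ε : ℝ × ℝ → ℝ, ContDiffOn ℝ 2 ε U ∧ ∀ q ∈ U, HasFDerivAt ε (planeForm f g q) q := by
  have hdiff : ∀ q ∈ U, DifferentiableAt ℝ f q ∧ DifferentiableAt ℝ g q := fun q hq =>
    ⟨hf.differentiableOn one_ne_zero |>.differentiableAt (hU.mem_nhds hq),
      hg.differentiableOn one_ne_zero |>.differentiableAt (hU.mem_nhds hq)⟩
  have hω := contDiffOn_planeForm hf hg
  obtain ⟨ε, hε⟩ := hconv.exists_forall_hasFDerivAt_of_fderiv_symmetric hU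
    (hω.differentiableOn one_ne_zero)
    fun q hq => fderiv_planeForm_symm (hdiff q hq).1 (hdiff q hq).2 (hclosed q hq)
  refine ⟨ε, ?_, hε⟩
  rw [show (2 : WithTop ℕ∞) = 1 + 1 by norm_num, contDiffOn_succ_iff_fderiv_of_isOpen hU]
  exact ⟨fun q hq => (hε q hq).differentiableAt.differentiableWithinAt, by simp,
    hω.congr fun q hq => (hε q hq).fderiv⟩

lemma pderivR_eq_of_hasFDerivAt {f : ℝ → ℝ → ℝ} {L : ℝ × ℝ →L[ℝ] ℝ} {r s : ℝ}
    (h : HasFDerivAt (uncurry f) L (r, s)) : pderivR f r s = L (1, 0) :=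
  (h.comp_hasDerivAt (f := fun x => (x, s)) r
    ((hasDerivAt_id r).prodMk (hasDerivAt_const r s))).deriv

lemma pderivS_eq_of_hasFDerivAt {f : ℝ → ℝ → ℝ} {L : ℝ × ℝ →L[ℝ] ℝ} {r s : ℝ}
    (h : HasFDerivAt (uncurry f) L (r, s)) : pderivS f r s = L (0, 1) :=
  (h.comp_hasDerivAt (f := fun y => (r, y)) s
    ((hasDerivAt_const s r).prodMk (hasDerivAt_id s))).deriv

/-- On an open convex set `U ⊆ (0,∞) × ℝ`, a Lagrangian thermodynamic state
`p = P(ρ,s)`, `T = Θ(ρ,s)` (i.e. `P_s = ρ²Θ_ρ`) admits a C² specific energy `ε` with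
`ε_s = Θ` and `ε_ρ = P/ρ²`: the first law `dε = T ds + p ρ⁻² dρ` holds. -/
theorem stmt_2 (U : Set (ℝ × ℝ)) (hU : IsOpen U) (hconv : Convex ℝ U)
    (hUsub : U ⊆ {q : ℝ × ℝ | 0 < q.1})
    (P Θ : ℝ → ℝ → ℝ)
    (hP : ContDiffOn ℝ 1 (Function.uncurry P) U)
    (hΘ : ContDiffOn ℝ 1 (Function.uncurry Θ) U)
    (hLag : ∀ q ∈ U, pderivS P q.1 q.2 = q.1 ^ 2 * pderivR Θ q.1 q.2) :
    ∃ ε : ℝ → ℝ → ℝ, ContDiffOn ℝ 2 (Function.uncurry ε) U ∧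
      ∀ q ∈ U, pderivS ε q.1 q.2 = Θ q.1 q.2 ∧
        pderivR ε q.1 q.2 = P q.1 q.2 / q.1 ^ 2 := by
  set Pρ : ℝ → ℝ → ℝ := fun r s => P r s / r ^ 2
  have hρ : ∀ q ∈ U, q.1 ^ 2 ≠ 0 := fun q hq => pow_ne_zero 2 (hUsub hq).ne'
  have hPρ : ContDiffOn ℝ 1 (uncurry Pρ) U := hP.div (contDiff_fst.pow 2).contDiffOn hρ
  have hhasFDerivAt {f : ℝ → ℝ → ℝ} (hf : ContDiffOn ℝ 1 (uncurry f) U) {q : ℝ × ℝ}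
      (hq : q ∈ U) : HasFDerivAt (uncurry f) (fderiv ℝ (uncurry f) q) (q.1, q.2) :=
    ((hf.differentiableOn one_ne_zero).differentiableAt (hU.mem_nhds hq)).hasFDerivAt
  have hclosed : ∀ q ∈ U, fderiv ℝ (uncurry Pρ) q (0, 1) = fderiv ℝ (uncurry Θ) q (1, 0) := by
    intro q hq
    rw [← pderivS_eq_of_hasFDerivAt (hhasFDerivAt hPρ hq),
      ← pderivR_eq_of_hasFDerivAt (hhasFDerivAt hΘ hq), pderivS, deriv_div_const, ← pderivS,
      hLag q hq, mul_div_cancel_left₀ _ (hρ q hq)]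
  obtain ⟨ε, hε₂, hdε⟩ := hconv.exists_contDiffOn_two_hasFDerivAt_planeForm hU hPρ hΘ hclosed
  refine ⟨curry ε, by rwa [uncurry_curry], fun q hq => ?_⟩
  have hdε' : HasFDerivAt (uncurry (curry ε)) (planeForm (uncurry Pρ) (uncurry Θ) q) (q.1, q.2) :=
    by simpa using hdε q hq
  rw [pderivS_eq_of_hasFDerivAt hdε', pderivR_eq_of_hasFDerivAt hdε']
  simp [planeForm, Pρ, uncurry]
end

section
/- Let U ⊆ (0,∞) × ℝ be open and let ε : U → ℝ be C² with ε_s(ρ,s) ≠ 0 on U. For (ρ,s) ∈ U and (a,b) ∈ ℝ², define the pullback of the quadratic form κ = d(T⁻¹)·dε − ρ⁻² d(pT⁻¹)·dρ to the state surface by q(a,b) = [a·∂_ρ(1/ε_s) + b·∂_s(1/ε_s)]·[a·ε_ρ + b·ε_s] − ρ⁻²·a·[a·∂_ρ(ρ²ε_ρ/ε_s) + b·∂_s(ρ²ε_ρ/ε_s)], where all functions are evaluated at (ρ,s). Then q(a,b) = −ε_s⁻¹·[ (ε_ρρ + 2ρ⁻¹ε_ρ)·a² + 2ε_ρs·a·b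 + ε_ss·b² ]. -/
/-! Expanding by the quotient rule, the terms containing `ε_ρ ε_sρ` and `ε_ρ ε_ss` cancel in
pairs, and the two cross terms `-ε_sρ ab/ε_s` and `-ε_ρs ab/ε_s` add up to `-2 ε_ρs ab/ε_s`
by the symmetry of second derivatives of the C² function `ε`. -/

open Function Filter Topology

section PartialDerivatives

variable {g : ℝ → ℝ → ℝ} {r s : ℝ}

theorem hasDerivAt_pderivR (h : DifferentiableAt ℝ (uncurry g) (r, s)) :
    HasDerivAt (fun x => g x s) (pderivR g r s) r :=
  (h.comp (g := uncurry g) (f := fun x => (x, s)) r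
    (differentiableAt_fun_id.prodMk (differentiableAt_const s))).hasDerivAt

theorem hasDerivAt_pderivS (h : DifferentiableAt ℝ (uncurry g) (r, s)) :
    HasDerivAt (fun y => g r y) (pderivS g r s) s :=
  (h.comp (g := uncurry g) s
    ((differentiableAt_const r).prodMk differentiableAt_fun_id)).hasDerivAt

theorem pderivR_eq_fderiv (h : DifferentiableAt ℝ (uncurry g) (r, s)) :
    pderivR g r s = fderiv ℝ (uncurry g) (r, s) (1, 0) :=
  (h.hasFDerivAt.comp_hasDerivAt (l := uncurry g) r
    ((hasDerivAt_id' r).prodMk (hasDerivAt_const r s))).deriv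

theorem pderivS_eq_fderiv (h : DifferentiableAt ℝ (uncurry g) (r, s)) :
    pderivS g r s = fderiv ℝ (uncurry g) (r, s) (0, 1) :=
  (h.hasFDerivAt.comp_hasDerivAt (l := uncurry g) s
    ((hasDerivAt_const s r).prodMk (hasDerivAt_id' s))).deriv

variable {m n : WithTop ℕ∞} {p : ℝ × ℝ}

theorem ContDiffAt.uncurry_pderivR_eventuallyEq (h : ContDiffAt ℝ n (uncurry g) p)
    (hn : 1 ≤ n) :
    uncurry (pderivR g) =ᶠ[𝓝 p] fun q => fderiv ℝ (uncurry g) q (1, 0) :=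
  ((h.of_le hn).eventually (by simp)).mono fun _ hq =>
    pderivR_eq_fderiv (hq.differentiableAt one_ne_zero)

theorem ContDiffAt.uncurry_pderivS_eventuallyEq (h : ContDiffAt ℝ n (uncurry g) p)
    (hn : 1 ≤ n) :
    uncurry (pderivS g) =ᶠ[𝓝 p] fun q => fderiv ℝ (uncurry g) q (0, 1) :=
  ((h.of_le hn).eventually (by simp)).mono fun _ hq =>
    pderivS_eq_fderiv (hq.differentiableAt one_ne_zero)

theorem ContDiffAt.uncurry_pderivR (h : ContDiffAt ℝ n (uncurry g) p) (hmn : m + 1 ≤ n) :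
    ContDiffAt ℝ m (uncurry (pderivR g)) p :=
  ((h.fderiv_right hmn).clm_apply contDiffAt_const).congr_of_eventuallyEq
    (h.uncurry_pderivR_eventuallyEq (le_add_self.trans hmn))

theorem ContDiffAt.uncurry_pderivS (h : ContDiffAt ℝ n (uncurry g) p) (hmn : m + 1 ≤ n) :
    ContDiffAt ℝ m (uncurry (pderivS g)) p :=
  ((h.fderiv_right hmn).clm_apply contDiffAt_const).congr_of_eventuallyEq
    (h.uncurry_pderivS_eventuallyEq (le_add_self.trans hmn))

theorem ContDiffAt.differentiableAt_uncurry_pderivR (h : ContDiffAt ℝ n (uncurry g) p)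
    (hn : 2 ≤ n) : DifferentiableAt ℝ (uncurry (pderivR g)) p :=
  (h.uncurry_pderivR (m := 1) hn).differentiableAt one_ne_zero

theorem ContDiffAt.differentiableAt_uncurry_pderivS (h : ContDiffAt ℝ n (uncurry g) p)
    (hn : 2 ≤ n) : DifferentiableAt ℝ (uncurry (pderivS g)) p :=
  (h.uncurry_pderivS (m := 1) hn).differentiableAt one_ne_zero

theorem pderivR_pderivS_eq_pderivS_pderivR (h : ContDiffAt ℝ n (uncurry g) (r, s))
    (hn : 2 ≤ n) :
    pderivR (pderivS g) r s = pderivS (pderivR g) r s := by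
  have hD : DifferentiableAt ℝ (fderiv ℝ (uncurry g)) (r, s) :=
    (h.fderiv_right (m := 1) hn).differentiableAt one_ne_zero
  have h1 : 1 ≤ n := le_trans (by norm_num) hn
  rw [pderivR_eq_fderiv (h.differentiableAt_uncurry_pderivS hn),
    pderivS_eq_fderiv (h.differentiableAt_uncurry_pderivR hn),
    (h.uncurry_pderivS_eventuallyEq h1).fderiv_eq, (h.uncurry_pderivR_eventuallyEq h1).fderiv_eq,
    fderiv_clm_apply hD (differentiableAt_const _), fderiv_clm_apply hD (differentiableAt_const _)]
  simpa using h.isSymmSndFDerivAt (by simpa using hn) (1, 0) (0, 1)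

end PartialDerivatives

/-- For a C² specific energy `ε(ρ,s)` with `ε_s ≠ 0` on an open set `U ⊆ (0,∞) × ℝ`,
the pullback of the form `κ = d(T⁻¹)·dε − ρ⁻² d(pT⁻¹)·dρ` to the state surface
(`T = ε_s`, `p = ρ²ε_ρ`) evaluated on `(a,b)` equals
`−ε_s⁻¹ ((ε_ρρ + 2ρ⁻¹ε_ρ) a² + 2 ε_ρs a b + ε_ss b²)`. -/
theorem stmt_3 (U : Set (ℝ × ℝ)) (hU : IsOpen U)
    (hUsub : U ⊆ {q : ℝ × ℝ | 0 < q.1})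
    (ε : ℝ → ℝ → ℝ) (hε : ContDiffOn ℝ 2 (Function.uncurry ε) U)
    (hεs : ∀ q ∈ U, pderivS ε q.1 q.2 ≠ 0)
    (r s : ℝ) (hq : (r, s) ∈ U) (a b : ℝ) :
    (a * pderivR (fun x y => (pderivS ε x y)⁻¹) r s
        + b * pderivS (fun x y => (pderivS ε x y)⁻¹) r s)
      * (a * pderivR ε r s + b * pderivS ε r s)
    - (r ^ 2)⁻¹ * a *
        (a * pderivR (fun x y => x ^ 2 * pderivR ε x y / pderivS ε x y) r s
          + b * pderivS (fun x y => x ^ 2 * pderivR ε x y / pderivS ε x y) r s)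
    = -(pderivS ε r s)⁻¹ *
        ((pderivR (pderivR ε) r s + 2 * r⁻¹ * pderivR ε r s) * a ^ 2
          + 2 * pderivS (pderivR ε) r s * (a * b)
          + pderivS (pderivS ε) r s * b ^ 2) := by
  have hε₂ : ContDiffAt ℝ 2 (uncurry ε) (r, s) := hε.contDiffAt (hU.mem_nhds hq)
  have dερ_dρ := hasDerivAt_pderivR (hε₂.differentiableAt_uncurry_pderivR le_rfl)
  have dεs_dρ := hasDerivAt_pderivR (hε₂.differentiableAt_uncurry_pderivS le_rfl)
  have dερ_ds := hasDerivAt_pderivS (hε₂.differentiableAt_uncurry_pderivR le_rfl)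
  have dεs_ds := hasDerivAt_pderivS (hε₂.differentiableAt_uncurry_pderivS le_rfl)
  have hT : pderivS ε r s ≠ 0 := hεs (r, s) hq
  have hr : r ≠ 0 := (hUsub hq).ne'
  have dTinv_dρ : pderivR (fun x y => (pderivS ε x y)⁻¹) r s
      = -pderivR (pderivS ε) r s / pderivS ε r s ^ 2 := (dεs_dρ.inv hT).deriv
  have dTinv_ds : pderivS (fun x y => (pderivS ε x y)⁻¹) r s
      = -pderivS (pderivS ε) r s / pderivS ε r s ^ 2 := (dεs_ds.inv hT).deriv
  have dpTinv_dρ : pderivR (fun x y => x ^ 2 * pderivR ε x y / pderivS ε x y) r s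
      = ((2 * r ^ 1 * pderivR ε r s + r ^ 2 * pderivR (pderivR ε) r s) * pderivS ε r s
          - r ^ 2 * pderivR ε r s * pderivR (pderivS ε) r s) / pderivS ε r s ^ 2 :=
    (((hasDerivAt_pow 2 r).mul dερ_dρ).div dεs_dρ hT).deriv
  have dpTinv_ds : pderivS (fun x y => x ^ 2 * pderivR ε x y / pderivS ε x y) r s
      = (r ^ 2 * pderivS (pderivR ε) r s * pderivS ε r s
          - r ^ 2 * pderivR ε r s * pderivS (pderivS ε) r s) / pderivS ε r s ^ 2 :=
    ((dερ_ds.const_mul (r ^ 2)).div dεs_ds hT).deriv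
  rw [dTinv_dρ, dTinv_ds, dpTinv_dρ, dpTinv_ds, pderivR_pderivS_eq_pderivS_pderivR hε₂ le_rfl]
  field_simp
  ring
end

section
/- Let λ₁,…,λ₆ be real numbers with λ₃ ≠ 0, λ₄ ≠ 0, λ₅ ≠ 0 and λ₆ + λ₄ − λ₅ + λ₃ ≠ 0. Let U be a nonempty connected open subset of {(ρ,s) : ρ > 0, λ₄s + λ₁ > 0} and let ε : U → ℝ be smooth with ε_s > 0 on U, satisfying the PDE system: λ₃ρ·ε_ρρ + (λ₄s + λ₁)·ε_ρs + (2λ₃ − λ₅)·ε_ρ − λ₂/ρ² = 0 and (λ₄s + λ₁)·ε_ss + λ₃ρ·ε_ρs − λ₆·ε_s = 0 on U. Then there exist constants C₁, C₂ such that for all (ρ,s) ∈ U: ρ²·ε_ρ(ρ,s) = C₁·ρ^{λ₅/λ₃} − λ₂/λ₅ and ε_s(ρ,s) = C₂·(λ₄s + λ₁)^{λ₆/λ₄}. That is, thermodynamic states for the Euler system on a plane admitting a one-dimensional symmetry algebra have pressure p = C₁ρ^{λ₅/λ₃} − λ₂/λ₅ and temperature T = C₂(λ₄s + λ₁)^{λ₆/λ₄}.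 -/
open Filter Topology Set

namespace Stmt7Aux

/-- Decompose a continuous linear map on ℝ² along the standard basis. -/
lemma clm_decomp (L : ℝ × ℝ →L[ℝ] ℝ) (v : ℝ × ℝ) :
    L v = v.1 * L (1, 0) + v.2 * L (0, 1) := by
  have hv : v = v.1 • ((1 : ℝ), (0 : ℝ)) + v.2 • ((0 : ℝ), (1 : ℝ)) := by
    apply Prod.ext <;> simp
  conv_lhs => rw [hv]
  rw [map_add, map_smul, map_smul]
  simp

variable {U : Set (ℝ × ℝ)} {q : ℝ × ℝ}

lemma diffAt_of_contDiffOn {F : Type*} [NormedAddCommGroup F] [NormedSpace ℝ F]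
    {f : ℝ × ℝ → F} (hU : IsOpen U) (hf : ContDiffOn ℝ (⊤ : ℕ∞) f U) (hq : q ∈ U) :
    DifferentiableAt ℝ f q :=
  (hf.contDiffAt (hU.mem_nhds hq)).differentiableAt (by simp)

variable {f : ℝ × ℝ → ℝ}

lemma contDiffOn_fderiv_apply (hU : IsOpen U) (hf : ContDiffOn ℝ (⊤ : ℕ∞) f U) (v : ℝ × ℝ) :
    ContDiffOn ℝ (⊤ : ℕ∞) (fun p => fderiv ℝ f p v) U := by
  have h1 : ContDiffOn ℝ (⊤ : ℕ∞) (fderiv ℝ f) U := hf.fderiv_of_isOpen hU (by simp)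
  exact (ContinuousLinearMap.apply ℝ ℝ v).contDiff.comp_contDiffOn h1

lemma hasFDerivAt_fderiv_apply (hU : IsOpen U) (hf : ContDiffOn ℝ (⊤ : ℕ∞) f U) (hq : q ∈ U)
    (v : ℝ × ℝ) :
    HasFDerivAt (fun p => fderiv ℝ f p v)
      ((ContinuousLinearMap.apply ℝ ℝ v).comp (fderiv ℝ (fderiv ℝ f) q)) q := by
  have h1 : ContDiffOn ℝ (⊤ : ℕ∞) (fderiv ℝ f) U := hf.fderiv_of_isOpen hU (by simp)
  have h2 : DifferentiableAt ℝ (fderiv ℝ f) q := diffAt_of_contDiffOn hU h1 hq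
  exact (ContinuousLinearMap.apply ℝ ℝ v).hasFDerivAt.comp q h2.hasFDerivAt

lemma fderiv_fderiv_apply (hU : IsOpen U) (hf : ContDiffOn ℝ (⊤ : ℕ∞) f U) (hq : q ∈ U)
    (v w : ℝ × ℝ) :
    fderiv ℝ (fun p => fderiv ℝ f p v) q w = fderiv ℝ (fderiv ℝ f) q w v := by
  rw [(hasFDerivAt_fderiv_apply hU hf hq v).fderiv]
  rfl

/-- Symmetry of second derivatives, in directional form. -/
lemma fderiv_swap (hU : IsOpen U) (hf : ContDiffOn ℝ (⊤ : ℕ∞) f U) (hq : q ∈ U) (v w : ℝ × ℝ) :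
    fderiv ℝ (fun p => fderiv ℝ f p v) q w = fderiv ℝ (fun p => fderiv ℝ f p w) q v := by
  rw [fderiv_fderiv_apply hU hf hq v w, fderiv_fderiv_apply hU hf hq w v]
  have h1 : ContDiffOn ℝ (⊤ : ℕ∞) (fderiv ℝ f) U := hf.fderiv_of_isOpen hU (by simp)
  have hev : ∀ᶠ y in 𝓝 q, HasFDerivAt f (fderiv ℝ f y) y := by
    filter_upwards [hU.mem_nhds hq] with y hy
    exact (diffAt_of_contDiffOn hU hf hy).hasFDerivAt
  exact second_derivative_symmetric_of_eventually hev
    (diffAt_of_contDiffOn hU h1 hq).hasFDerivAt w v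

lemma deriv_comp_fst {g : ℝ × ℝ → ℝ} {r s : ℝ} (h : DifferentiableAt ℝ g (r, s)) :
    deriv (fun x => g (x, s)) r = fderiv ℝ g (r, s) (1, 0) := by
  have h1 : HasFDerivAt (fun x : ℝ => (x, s))
      ((ContinuousLinearMap.id ℝ ℝ).prod 0) r :=
    (hasFDerivAt_id r).prodMk (hasFDerivAt_const s r)
  have h2 := h.hasFDerivAt.comp r h1
  have h3 : HasDerivAt (fun x => g (x, s)) (fderiv ℝ g (r, s) (1, 0)) r := by
    have := h2.hasDerivAt
    simp at this
    exact this
  exact h3.deriv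

lemma deriv_comp_snd {g : ℝ × ℝ → ℝ} {r s : ℝ} (h : DifferentiableAt ℝ g (r, s)) :
    deriv (fun y => g (r, y)) s = fderiv ℝ g (r, s) (0, 1) := by
  have h1 : HasFDerivAt (fun y : ℝ => (r, y))
      ((0 : ℝ →L[ℝ] ℝ).prod (ContinuousLinearMap.id ℝ ℝ)) s :=
    (hasFDerivAt_const r s).prodMk (hasFDerivAt_id s)
  have h2 := h.hasFDerivAt.comp s h1
  have h3 : HasDerivAt (fun y => g (r, y)) (fderiv ℝ g (r, s) (0, 1)) s := by
    have := h2.hasDerivAt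
    simp at this
    exact this
  exact h3.deriv

/-- A function with vanishing derivative on a preconnected open set is constant. -/
lemma const_of_fderiv_zero (hU : IsOpen U) (hc : IsPreconnected U) {φ : ℝ × ℝ → ℝ}
    (h : ∀ q ∈ U, HasFDerivAt φ (0 : ℝ × ℝ →L[ℝ] ℝ) q) {x y : ℝ × ℝ}
    (hx : x ∈ U) (hy : y ∈ U) : φ x = φ y := by
  have key : ∀ z ∈ U, ∀ᶠ w in 𝓝 z, φ w = φ z := by
    intro z hz
    obtain ⟨ρ, hρ, hball⟩ := Metric.isOpen_iff.1 hU z hz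
    have hconv : Convex ℝ (Metric.ball z ρ) := convex_ball z ρ
    have hdiff : DifferentiableOn ℝ φ (Metric.ball z ρ) := fun w hw =>
      ((h w (hball hw)).differentiableAt).differentiableWithinAt
    have hfd : ∀ w ∈ Metric.ball z ρ, fderivWithin ℝ φ (Metric.ball z ρ) w = 0 := by
      intro w hw
      rw [fderivWithin_of_isOpen Metric.isOpen_ball hw]
      exact (h w (hball hw)).fderiv
    filter_upwards [Metric.isOpen_ball.mem_nhds (Metric.mem_ball_self hρ)] with w hw
    exact hconv.is_const_of_fderivWithin_eq_zero hdiff hfd hw (Metric.mem_ball_self hρ)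
  set V1 : Set (ℝ × ℝ) := {z | ∀ᶠ w in 𝓝 z, φ w = φ y} with hV1
  set V2 : Set (ℝ × ℝ) := {z | ∀ᶠ w in 𝓝 z, φ w ≠ φ y} with hV2
  have hV1o : IsOpen V1 := by
    apply isOpen_iff_mem_nhds.2
    intro z hz
    exact hz.eventually_nhds
  have hV2o : IsOpen V2 := by
    apply isOpen_iff_mem_nhds.2
    intro z hz
    exact hz.eventually_nhds
  have hdisj : Disjoint V1 V2 := by
    rw [Set.disjoint_left]
    intro z hz1 hz2
    obtain ⟨w, hw1, hw2⟩ := (hz1.and hz2).exists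
    exact hw2 hw1
  have hsub : U ⊆ V1 ∪ V2 := by
    intro z hz
    rcases eq_or_ne (φ z) (φ y) with he | he
    · left
      filter_upwards [key z hz] with w hw
      rw [hw, he]
    · right
      filter_upwards [key z hz] with w hw
      rw [hw]; exact he
  have hne1 : (U ∩ V1).Nonempty := by
    refine ⟨y, hy, ?_⟩
    filter_upwards [key y hy] with w hw using hw
  have hUV1 : U ⊆ V1 := hc.subset_left_of_subset_union hV1o hV2o hdisj hsub hne1
  exact (hUV1 hx).self_of_nhds

lemma clm_eq_zero (L : ℝ × ℝ →L[ℝ] ℝ) (h1 : L (1, 0) = 0) (h2 : L (0, 1) = 0) :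
    L = (0 : ℝ × ℝ →L[ℝ] ℝ) :=
  ContinuousLinearMap.ext fun v => by rw [clm_decomp L v, h1, h2]; simp

end Stmt7Aux

open Stmt7Aux in
/-- Thermodynamic states of the Euler system on a plane admitting a one-dimensional
symmetry algebra (generic parameters): solutions of the invariance PDE system have
`p = ρ²ε_ρ = C₁ρ^{λ₅/λ₃} − λ₂/λ₅` and `T = ε_s = C₂(λ₄s+λ₁)^{λ₆/λ₄}`. -/
theorem stmt_7 (l1 l2 l3 l4 l5 l6 : ℝ)
    (h3 : l3 ≠ 0) (h4 : l4 ≠ 0) (h5 : l5 ≠ 0)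
    (hgen : l6 + l4 - l5 + l3 ≠ 0)
    (U : Set (ℝ × ℝ)) (hU : IsOpen U) (hconn : IsConnected U) (hne : U.Nonempty)
    (hUsub : U ⊆ {q : ℝ × ℝ | 0 < q.1 ∧ 0 < l4 * q.2 + l1})
    (ε : ℝ → ℝ → ℝ) (hε : ContDiffOn ℝ (⊤ : ℕ∞) (Function.uncurry ε) U)
    (hεs : ∀ q ∈ U, 0 < pderivS ε q.1 q.2)
    (hpde1 : ∀ q ∈ U,
      l3 * q.1 * pderivR (pderivR ε) q.1 q.2
        + (l4 * q.2 + l1) * pderivS (pderivR ε) q.1 q.2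
        + (2 * l3 - l5) * pderivR ε q.1 q.2 - l2 / q.1 ^ 2 = 0)
    (hpde2 : ∀ q ∈ U,
      (l4 * q.2 + l1) * pderivS (pderivS ε) q.1 q.2
        + l3 * q.1 * pderivS (pderivR ε) q.1 q.2 - l6 * pderivS ε q.1 q.2 = 0) :
    ∃ C1 C2 : ℝ, ∀ q ∈ U,
      q.1 ^ 2 * pderivR ε q.1 q.2 = C1 * q.1 ^ (l5 / l3) - l2 / l5 ∧
      pderivS ε q.1 q.2 = C2 * (l4 * q.2 + l1) ^ (l6 / l4) := by
  set E : ℝ × ℝ → ℝ := Function.uncurry ε with hEdef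
  set a : ℝ × ℝ → ℝ := fun p => fderiv ℝ E p (1, 0) with hadef
  set b : ℝ × ℝ → ℝ := fun p => fderiv ℝ E p (0, 1) with hbdef
  have hsmA : ContDiffOn ℝ (⊤ : ℕ∞) a U := contDiffOn_fderiv_apply hU hε (1, 0)
  have hsmB : ContDiffOn ℝ (⊤ : ℕ∞) b U := contDiffOn_fderiv_apply hU hε (0, 1)
  set a1 : ℝ × ℝ → ℝ := fun p => fderiv ℝ a p (1, 0) with ha1def
  set a2 : ℝ × ℝ → ℝ := fun p => fderiv ℝ a p (0, 1) with ha2def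
  set b1 : ℝ × ℝ → ℝ := fun p => fderiv ℝ b p (1, 0) with hb1def
  set b2 : ℝ × ℝ → ℝ := fun p => fderiv ℝ b p (0, 1) with hb2def
  have hsmA1 : ContDiffOn ℝ (⊤ : ℕ∞) a1 U := contDiffOn_fderiv_apply hU hsmA (1, 0)
  have hsmA2 : ContDiffOn ℝ (⊤ : ℕ∞) a2 U := contDiffOn_fderiv_apply hU hsmA (0, 1)
  have hsmB1 : ContDiffOn ℝ (⊤ : ℕ∞) b1 U := contDiffOn_fderiv_apply hU hsmB (1, 0)
  have hsmB2 : ContDiffOn ℝ (⊤ : ℕ∞) b2 U := contDiffOn_fderiv_apply hU hsmB (0, 1)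
  -- translation of the partial derivatives
  have hPR : ∀ q ∈ U, pderivR ε q.1 q.2 = a q := by
    rintro ⟨r, s⟩ hq
    exact deriv_comp_fst (diffAt_of_contDiffOn hU hε hq)
  have hPS : ∀ q ∈ U, pderivS ε q.1 q.2 = b q := by
    rintro ⟨r, s⟩ hq
    exact deriv_comp_snd (diffAt_of_contDiffOn hU hε hq)
  have hnhds1 : ∀ r s : ℝ, (r, s) ∈ U → ∀ᶠ x in 𝓝 r, (x, s) ∈ U := by
    intro r s hq
    have hc : Continuous (fun x : ℝ => (x, s)) := by fun_prop
    exact hc.continuousAt.preimage_mem_nhds (hU.mem_nhds hq)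
  have hnhds2 : ∀ r s : ℝ, (r, s) ∈ U → ∀ᶠ y in 𝓝 s, (r, y) ∈ U := by
    intro r s hq
    have hc : Continuous (fun y : ℝ => (r, y)) := by fun_prop
    exact hc.continuousAt.preimage_mem_nhds (hU.mem_nhds hq)
  have hPRR : ∀ q ∈ U, pderivR (pderivR ε) q.1 q.2 = a1 q := by
    rintro ⟨r, s⟩ hq
    have hev : (fun x => pderivR ε x s) =ᶠ[𝓝 r] (fun x => a (x, s)) := by
      filter_upwards [hnhds1 r s hq] with x hx using hPR (x, s) hx
    show deriv (fun x => pderivR ε x s) r = a1 (r, s)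
    rw [hev.deriv_eq]
    exact deriv_comp_fst (diffAt_of_contDiffOn hU hsmA hq)
  have hPRS : ∀ q ∈ U, pderivS (pderivR ε) q.1 q.2 = a2 q := by
    rintro ⟨r, s⟩ hq
    have hev : (fun y => pderivR ε r y) =ᶠ[𝓝 s] (fun y => a (r, y)) := by
      filter_upwards [hnhds2 r s hq] with y hy using hPR (r, y) hy
    show deriv (fun y => pderivR ε r y) s = a2 (r, s)
    rw [hev.deriv_eq]
    exact deriv_comp_snd (diffAt_of_contDiffOn hU hsmA hq)
  have hPSS : ∀ q ∈ U, pderivS (pderivS ε) q.1 q.2 = b2 q := by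
    rintro ⟨r, s⟩ hq
    have hev : (fun y => pderivS ε r y) =ᶠ[𝓝 s] (fun y => b (r, y)) := by
      filter_upwards [hnhds2 r s hq] with y hy using hPS (r, y) hy
    show deriv (fun y => pderivS ε r y) s = b2 (r, s)
    rw [hev.deriv_eq]
    exact deriv_comp_snd (diffAt_of_contDiffOn hU hsmB hq)
  -- symmetry of mixed second derivatives
  have hsym : ∀ q ∈ U, a2 q = b1 q := by
    intro q hq
    exact fderiv_swap hU hε hq (1, 0) (0, 1)
  -- PDEs in fderiv form
  have hA : ∀ q ∈ U,
      l3 * q.1 * a1 q + (l4 * q.2 + l1) * a2 q + (2 * l3 - l5) * a q - l2 / q.1 ^ 2 = 0 := by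
    intro q hq
    rw [← hPRR q hq, ← hPRS q hq, ← hPR q hq]
    exact hpde1 q hq
  have hB : ∀ q ∈ U,
      (l4 * q.2 + l1) * b2 q + l3 * q.1 * a2 q - l6 * b q = 0 := by
    intro q hq
    rw [← hPSS q hq, ← hPRS q hq, ← hPS q hq]
    exact hpde2 q hq
  -- KEY STEP: the mixed partial a2 vanishes on U
  have hkey : ∀ q ∈ U, a2 q = 0 := by
    rintro ⟨r, s⟩ hq
    have hr : (0 : ℝ) < r := (hUsub hq).1
    set X : ℝ := fderiv ℝ a2 (r, s) (1, 0) with hX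
    set Y : ℝ := fderiv ℝ a2 (r, s) (0, 1) with hY
    -- swap identities
    have hswapA : fderiv ℝ a1 (r, s) (0, 1) = X := fderiv_swap hU hsmA hq (1, 0) (0, 1)
    have hevab : a2 =ᶠ[𝓝 (r, s)] b1 := by
      filter_upwards [hU.mem_nhds hq] with p hp using hsym p hp
    have hswapB : fderiv ℝ b2 (r, s) (1, 0) = Y := by
      have h1 : fderiv ℝ b2 (r, s) (1, 0) = fderiv ℝ b1 (r, s) (0, 1) :=
        fderiv_swap hU hsmB hq (0, 1) (1, 0)
      rw [h1, hevab.symm.fderiv_eq]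
    -- differentiate PDE1 in the s-direction
    have HA1 : HasFDerivAt a1 (fderiv ℝ a1 (r, s)) (r, s) :=
      (diffAt_of_contDiffOn hU hsmA1 hq).hasFDerivAt
    have HA2 : HasFDerivAt a2 (fderiv ℝ a2 (r, s)) (r, s) :=
      (diffAt_of_contDiffOn hU hsmA2 hq).hasFDerivAt
    have HB1 : HasFDerivAt b1 (fderiv ℝ b1 (r, s)) (r, s) :=
      (diffAt_of_contDiffOn hU hsmB1 hq).hasFDerivAt
    have HB2 : HasFDerivAt b2 (fderiv ℝ b2 (r, s)) (r, s) :=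
      (diffAt_of_contDiffOn hU hsmB2 hq).hasFDerivAt
    have HA : HasFDerivAt a (fderiv ℝ a (r, s)) (r, s) :=
      (diffAt_of_contDiffOn hU hsmA hq).hasFDerivAt
    have HB : HasFDerivAt b (fderiv ℝ b (r, s)) (r, s) :=
      (diffAt_of_contDiffOn hU hsmB hq).hasFDerivAt
    have Hfst : HasFDerivAt (fun p : ℝ × ℝ => p.1)
        (ContinuousLinearMap.fst ℝ ℝ ℝ) (r, s) := hasFDerivAt_fst
    have Hsnd : HasFDerivAt (fun p : ℝ × ℝ => p.2)
        (ContinuousLinearMap.snd ℝ ℝ ℝ) (r, s) := hasFDerivAt_snd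
    have Hc1 : HasFDerivAt (fun p : ℝ × ℝ => l3 * p.1)
        (l3 • ContinuousLinearMap.fst ℝ ℝ ℝ) (r, s) := Hfst.const_mul l3
    have Hc2 : HasFDerivAt (fun p : ℝ × ℝ => l4 * p.2 + l1)
        (l4 • ContinuousLinearMap.snd ℝ ℝ ℝ) (r, s) := (Hsnd.const_mul l4).add_const l1
    -- derivative of p ↦ l2 / p.1 ^ 2
    have Hmag : HasDerivAt (fun x : ℝ => l2 / x ^ 2) (l2 * (-(2 * r) / (r ^ 2) ^ 2)) r := by
      have h1 : HasDerivAt (fun x : ℝ => x ^ 2) (2 * r) r := by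
        simpa using hasDerivAt_pow 2 r
      have h2 := (h1.inv (by positivity)).const_mul l2
      simpa [div_eq_mul_inv] using h2
    have Hmag' : HasFDerivAt (fun p : ℝ × ℝ => l2 / p.1 ^ 2)
        ((l2 * (-(2 * r) / (r ^ 2) ^ 2)) • ContinuousLinearMap.fst ℝ ℝ ℝ) (r, s) :=
      by have := Hmag.comp_hasFDerivAt (r, s) Hfst; exact this
    -- total derivative of the LHS of PDE1
    have HG1 : HasFDerivAt
        (fun p : ℝ × ℝ => l3 * p.1 * a1 p + (l4 * p.2 + l1) * a2 p
          + (2 * l3 - l5) * a p - l2 / p.1 ^ 2)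
        ((((l3 * r) • fderiv ℝ a1 (r, s) + a1 (r, s) • (l3 • ContinuousLinearMap.fst ℝ ℝ ℝ))
          + ((l4 * s + l1) • fderiv ℝ a2 (r, s)
              + a2 (r, s) • (l4 • ContinuousLinearMap.snd ℝ ℝ ℝ)))
          + (2 * l3 - l5) • fderiv ℝ a (r, s)
          - (l2 * (-(2 * r) / (r ^ 2) ^ 2)) • ContinuousLinearMap.fst ℝ ℝ ℝ) (r, s) :=
      (((Hc1.mul HA1).add (Hc2.mul HA2)).add (HA.const_mul (2 * l3 - l5))).sub Hmag'
    have hG1zero : (fun p : ℝ × ℝ => l3 * p.1 * a1 p + (l4 * p.2 + l1) * a2 p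
          + (2 * l3 - l5) * a p - l2 / p.1 ^ 2) =ᶠ[𝓝 (r, s)] (fun _ => (0 : ℝ)) := by
      filter_upwards [hU.mem_nhds hq] with p hp using hA p hp
    have hL1 := (HG1.congr_of_eventuallyEq hG1zero.symm).unique (hasFDerivAt_const (0 : ℝ) (r, s))
    have E1 : l3 * r * fderiv ℝ a1 (r, s) (0, 1) + (l4 * s + l1) * Y
        + (l4 + (2 * l3 - l5)) * a2 (r, s) = 0 := by
      have := ContinuousLinearMap.ext_iff.1 hL1 (0, 1)
      simp only [ContinuousLinearMap.add_apply, ContinuousLinearMap.sub_apply,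
        ContinuousLinearMap.smul_apply, ContinuousLinearMap.coe_fst',
        ContinuousLinearMap.coe_snd', ContinuousLinearMap.zero_apply, smul_eq_mul] at this
      rw [hY]
      linarith [this]
    -- differentiate PDE2 in the r-direction
    have HG2 : HasFDerivAt
        (fun p : ℝ × ℝ => (l4 * p.2 + l1) * b2 p + l3 * p.1 * a2 p - l6 * b p)
        ((((l4 * s + l1) • fderiv ℝ b2 (r, s)
            + b2 (r, s) • (l4 • ContinuousLinearMap.snd ℝ ℝ ℝ))
          + ((l3 * r) • fderiv ℝ a2 (r, s) + a2 (r, s) • (l3 • ContinuousLinearMap.fst ℝ ℝ ℝ)))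
          - l6 • fderiv ℝ b (r, s)) (r, s) :=
      ((Hc2.mul HB2).add (Hc1.mul HA2)).sub (HB.const_mul l6)
    have hG2zero : (fun p : ℝ × ℝ => (l4 * p.2 + l1) * b2 p + l3 * p.1 * a2 p - l6 * b p)
        =ᶠ[𝓝 (r, s)] (fun _ => (0 : ℝ)) := by
      filter_upwards [hU.mem_nhds hq] with p hp using hB p hp
    have hL2 := (HG2.congr_of_eventuallyEq hG2zero.symm).unique (hasFDerivAt_const (0 : ℝ) (r, s))
    have E2 : (l4 * s + l1) * fderiv ℝ b2 (r, s) (1, 0) + l3 * r * X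
        + l3 * a2 (r, s) - l6 * fderiv ℝ b (r, s) (1, 0) = 0 := by
      have := ContinuousLinearMap.ext_iff.1 hL2 (1, 0)
      simp only [ContinuousLinearMap.add_apply, ContinuousLinearMap.sub_apply,
        ContinuousLinearMap.smul_apply, ContinuousLinearMap.coe_fst',
        ContinuousLinearMap.coe_snd', ContinuousLinearMap.zero_apply, smul_eq_mul] at this
      rw [hX]
      linarith [this]
    -- identifications
    have hb1a2 : fderiv ℝ b (r, s) (1, 0) = a2 (r, s) := (hsym (r, s) hq).symm
    rw [hswapA] at E1
    rw [hswapB, hb1a2] at E2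
    -- E1 : l3*r*X + t*Y + (l4 + 2l3 - l5) * a2 = 0
    -- E2 : t*Y + l3*r*X + l3*a2 - l6*a2 = 0
    have hfinal : (l6 + l4 - l5 + l3) * a2 (r, s) = 0 := by linarith
    exact (mul_eq_zero.1 hfinal).resolve_left hgen
  have hb1zero : ∀ q ∈ U, b1 q = 0 := fun q hq => (hsym q hq) ▸ hkey q hq
  -- reduced ODEs
  have hODE1 : ∀ q ∈ U, l3 * q.1 * a1 q + (2 * l3 - l5) * a q - l2 / q.1 ^ 2 = 0 := by
    intro q hq
    have h := hA q hq
    rw [hkey q hq] at h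
    linarith
  have hODE2 : ∀ q ∈ U, (l4 * q.2 + l1) * b2 q - l6 * b q = 0 := by
    intro q hq
    have h := hB q hq
    rw [hkey q hq] at h
    linarith
  obtain ⟨q0, hq0⟩ := hne
  set φ : ℝ × ℝ → ℝ := fun p => (p.1 * p.1 * a p + l2 / l5) * p.1 ^ (-(l5 / l3)) with hφdef
  set ψ : ℝ × ℝ → ℝ := fun p => b p * (l4 * p.2 + l1) ^ (-(l6 / l4)) with hψdef
  have hφconst : ∀ q ∈ U, HasFDerivAt φ (0 : ℝ × ℝ →L[ℝ] ℝ) q := by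
    rintro ⟨r, s⟩ hq
    have hr : (0 : ℝ) < r := (hUsub hq).1
    have HA : HasFDerivAt a (fderiv ℝ a (r, s)) (r, s) :=
      (diffAt_of_contDiffOn hU hsmA hq).hasFDerivAt
    have Hfst : HasFDerivAt (fun p : ℝ × ℝ => p.1)
        (ContinuousLinearMap.fst ℝ ℝ ℝ) (r, s) := hasFDerivAt_fst
    have Hg : HasFDerivAt (fun p : ℝ × ℝ => p.1 ^ (-(l5 / l3)))
        ((-(l5 / l3) * r ^ (-(l5 / l3) - 1)) • ContinuousLinearMap.fst ℝ ℝ ℝ) (r, s) :=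
      by have := (Real.hasDerivAt_rpow_const (p := -(l5 / l3)) (Or.inl hr.ne')).comp_hasFDerivAt (r, s) Hfst; exact this
    have Hp := ((Hfst.mul Hfst).mul HA).add_const (l2 / l5)
    have Hφ' := Hp.mul Hg
    have hk : fderiv ℝ a (r, s) (0, 1) = 0 := hkey (r, s) hq
    have hO := hODE1 (r, s) hq
    have hO' : l3 * r * fderiv ℝ a (r, s) (1, 0) + (2 * l3 - l5) * a (r, s)
        - l2 / r ^ 2 = 0 := hO
    have hsplit : r ^ (-(l5 / l3)) = r ^ (-(l5 / l3) - 1) * r := by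
      rw [← Real.rpow_add_one hr.ne']
      ring_nf
    refine Hφ'.congr_fderiv ?_
    apply clm_eq_zero
    · simp only [ContinuousLinearMap.add_apply, ContinuousLinearMap.smul_apply,
        ContinuousLinearMap.coe_fst', smul_eq_mul, hk, Pi.mul_apply]
      rw [hsplit]
      have hr' : r ≠ 0 := hr.ne'
      have hA1c : (fderiv ℝ a (r, s)) (1, 0)
          = (l2 / r ^ 2 - (2 * l3 - l5) * a (r, s)) / (l3 * r) := by
        rw [eq_div_iff (mul_ne_zero h3 hr')]
        linear_combination hO'
      rw [hA1c]
      field_simp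
      ring
    · simp only [ContinuousLinearMap.add_apply, ContinuousLinearMap.smul_apply,
        ContinuousLinearMap.coe_fst', smul_eq_mul, hk]
      ring
  have hψconst : ∀ q ∈ U, HasFDerivAt ψ (0 : ℝ × ℝ →L[ℝ] ℝ) q := by
    rintro ⟨r, s⟩ hq
    have ht : (0 : ℝ) < l4 * s + l1 := (hUsub hq).2
    have HB : HasFDerivAt b (fderiv ℝ b (r, s)) (r, s) :=
      (diffAt_of_contDiffOn hU hsmB hq).hasFDerivAt
    have Hsnd : HasFDerivAt (fun p : ℝ × ℝ => p.2)
        (ContinuousLinearMap.snd ℝ ℝ ℝ) (r, s) := hasFDerivAt_snd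
    have Ht : HasFDerivAt (fun p : ℝ × ℝ => l4 * p.2 + l1)
        (l4 • ContinuousLinearMap.snd ℝ ℝ ℝ) (r, s) := (Hsnd.const_mul l4).add_const l1
    have Hg : HasFDerivAt (fun p : ℝ × ℝ => (l4 * p.2 + l1) ^ (-(l6 / l4)))
        ((-(l6 / l4) * (l4 * s + l1) ^ (-(l6 / l4) - 1)) •
          (l4 • ContinuousLinearMap.snd ℝ ℝ ℝ)) (r, s) :=
      by have := (Real.hasDerivAt_rpow_const (p := -(l6 / l4)) (Or.inl ht.ne')).comp_hasFDerivAt (r, s) Ht; exact this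
    have Hψ' := HB.mul Hg
    have hk : fderiv ℝ b (r, s) (1, 0) = 0 := hb1zero (r, s) hq
    have hO' : (l4 * s + l1) * fderiv ℝ b (r, s) (0, 1) - l6 * b (r, s) = 0 :=
      hODE2 (r, s) hq
    have hsplit : (l4 * s + l1) ^ (-(l6 / l4))
        = (l4 * s + l1) ^ (-(l6 / l4) - 1) * (l4 * s + l1) := by
      rw [← Real.rpow_add_one ht.ne']
      ring_nf
    refine Hψ'.congr_fderiv ?_
    apply clm_eq_zero
    · simp only [ContinuousLinearMap.add_apply, ContinuousLinearMap.smul_apply,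
        ContinuousLinearMap.coe_snd', smul_eq_mul, hk]
      ring
    · simp only [ContinuousLinearMap.add_apply, ContinuousLinearMap.smul_apply,
        ContinuousLinearMap.coe_snd', smul_eq_mul, hk]
      rw [hsplit]
      have ht' : l4 * s + l1 ≠ 0 := ht.ne'
      have hB2c : (fderiv ℝ b (r, s)) (0, 1) = l6 * b (r, s) / (l4 * s + l1) := by
        rw [eq_div_iff ht']
        linear_combination hO'
      rw [hB2c]
      field_simp
      ring
  refine ⟨φ q0, ψ q0, ?_⟩
  rintro ⟨r, s⟩ hq
  have hr : (0 : ℝ) < r := (hUsub hq).1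
  have ht : (0 : ℝ) < l4 * s + l1 := (hUsub hq).2
  have hcφ : (r * r * a (r, s) + l2 / l5) * r ^ (-(l5 / l3)) = φ q0 :=
    const_of_fderiv_zero hU hconn.isPreconnected hφconst hq hq0
  have hcψ : b (r, s) * (l4 * s + l1) ^ (-(l6 / l4)) = ψ q0 :=
    const_of_fderiv_zero hU hconn.isPreconnected hψconst hq hq0
  constructor
  · have hone : r ^ (-(l5 / l3)) * r ^ (l5 / l3) = 1 := by
      rw [← Real.rpow_add hr]
      norm_num
    have h1 : r * r * a (r, s) + l2 / l5 = φ q0 * r ^ (l5 / l3) := by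
      calc r * r * a (r, s) + l2 / l5
          = ((r * r * a (r, s) + l2 / l5) * r ^ (-(l5 / l3))) * r ^ (l5 / l3) := by
            rw [mul_assoc (r * r * a (r, s) + l2 / l5), hone, mul_one]
        _ = φ q0 * r ^ (l5 / l3) := by rw [hcφ]
    have h2 := hPR (r, s) hq
    show r ^ 2 * pderivR ε r s = φ q0 * r ^ (l5 / l3) - l2 / l5
    rw [h2, pow_two]
    linarith
  · have hone : (l4 * s + l1) ^ (-(l6 / l4)) * (l4 * s + l1) ^ (l6 / l4) = 1 := by
      rw [← Real.rpow_add ht]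
      norm_num
    have h1 : b (r, s) = ψ q0 * (l4 * s + l1) ^ (l6 / l4) := by
      calc b (r, s)
          = (b (r, s) * (l4 * s + l1) ^ (-(l6 / l4))) * (l4 * s + l1) ^ (l6 / l4) := by
            rw [mul_assoc (b (r, s)), hone, mul_one]
        _ = ψ q0 * (l4 * s + l1) ^ (l6 / l4) := by rw [hcψ]
    have h2 := hPS (r, s) hq
    show pderivS ε r s = ψ q0 * (l4 * s + l1) ^ (l6 / l4)
    rw [h2, h1]
end

section
/- Let α₀ ≠ 0 and β₀ be real numbers. There is no nonempty open set U ⊆ (0,∞) × ℝ and C¹ functions P, Θ : U → ℝ such that on U: (i) α₀·Θ_s = 0 and α₀·ρ²·Θ_ρ − β₀ = 0 (tangency of the vector field A = α₀∂_s + β₀∂_p to the state, i.e. vanishing of the restriction of ι_AΩ), and (ii) the admissibility condition Θ_s·P_ρ − ρ²·Θ_ρ² > 0 holds. Consequently, there are no admissible thermodynamic states for the Euler system on a plane that admit a two-dimensional non-commutative symmetry algebra. -/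
/-- There is no admissible thermodynamic state tangent to `A = α₀∂_s + β₀∂_p` with
`α₀ ≠ 0`: no thermodynamic states of the Euler system on a plane admit a two-dimensional
non-commutative symmetry algebra. -/
theorem stmt_9 (a0 b0 : ℝ) (ha : a0 ≠ 0) :
    ¬ ∃ (U : Set (ℝ × ℝ)) (P Θ : ℝ → ℝ → ℝ),
      IsOpen U ∧ U.Nonempty ∧ U ⊆ {q : ℝ × ℝ | 0 < q.1} ∧
      ContDiffOn ℝ 1 (Function.uncurry P) U ∧
      ContDiffOn ℝ 1 (Function.uncurry Θ) U ∧
      (∀ q ∈ U,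
        a0 * pderivS Θ q.1 q.2 = 0 ∧
        a0 * q.1 ^ 2 * pderivR Θ q.1 q.2 - b0 = 0 ∧
        0 < pderivS Θ q.1 q.2 * pderivR P q.1 q.2
            - q.1 ^ 2 * (pderivR Θ q.1 q.2) ^ 2) := by
  rintro ⟨U, P, Θ, -, ⟨q, hq⟩, -, -, -, h⟩
  obtain ⟨htangent, -, hadmissible⟩ := h q hq
  have hΘs : pderivS Θ q.1 q.2 = 0 := (mul_eq_zero.mp htangent).resolve_left ha
  rw [hΘs, zero_mul, zero_sub, neg_pos] at hadmissible
  exact hadmissible.not_ge (by positivity)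
end

section
/- Let α₄, α₅, α₆, β₁, β₂, β₄, β₅, β₆ be real numbers with β₄ ≠ 0, β₅ ≠ 0, and set α₁ = α₄β₁/β₄, α₂ = α₅β₂/β₅, α₃ = α₅ − α₄ − α₆, β₃ = β₅ − β₄ − β₆. Define ς₁ = α₆β₄ − α₄β₆, ς₂ = α₄β₅ − α₅β₄, ς₃ = α₆β₅ − α₅β₆, and assume ς₁ + ς₂ ≠ 0 and ς₂ ≠ 0. Let U be a nonempty connected open subset of {(ρ,s) : ρ > 0, β₄s + β₁ > 0} and let ε : U → ℝ be smooth with ε_s > 0 on U, satisfying the four equations: α₃ρ·ε_ρρ + (α₄s + α₁)·ε_ρs + (2α₃ − α₅)·ε_ρ − α₂/ρ² = 0, β₃ρ·ε_ρρ + (β₄s + β₁)·ε_ρs + (2β₃ − β₅)·ε_ρ − β₂/ρ² = 0, (α₄s + α₁)·ε_ss + α₃ρ·ε_ρs − α₆·ε_s = 0, (β₄s + β₁)·ε_ss + β₃ρ·ε_ρs − β₆·ε_s = 0 on U. Then there exist constants C₁, C₂ such that on U: ρ²ε_ρ = C₁·ρ^{ς₂/(ς₁+ς₂)}·(β₄s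 + β₁)^{(ς₃+ς₂)/(ς₁+ς₂)} − β₂/β₅ and ε_s = C₂·ρ^{−ς₁/(ς₁+ς₂)}·(β₄s + β₁)^{(ς₃−ς₁)/(ς₁+ς₂)}. -/
theorem myconst_stmt10 {E : Type*} [NormedAddCommGroup E] [NormedSpace ℝ E] {F : E → ℝ}
    {U : Set E} (hU : IsOpen U) (hc : IsPreconnected U) {q₀ : E} (hq₀ : q₀ ∈ U)
    (hd : ∀ q ∈ U, HasFDerivAt F (0 : E →L[ℝ] ℝ) q) : ∀ q ∈ U, F q = F q₀ := by
  have hloc : ∀ q ∈ U, ∀ᶠ y in nhds q, F y = F q := by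
    intro q hq
    obtain ⟨r, hr, hball⟩ := Metric.isOpen_iff.1 hU q hq
    have hconv : Convex ℝ (Metric.ball q r) := convex_ball q r
    have hcst : ∀ y ∈ Metric.ball q r, F y = F q := by
      intro y hy
      exact hconv.is_const_of_fderivWithin_eq_zero
        (fun z hz => ((hd z (hball hz)).differentiableAt).differentiableWithinAt)
        (fun z hz => by
          rw [fderivWithin_of_isOpen Metric.isOpen_ball hz]
          exact (hd z (hball hz)).fderiv) hy (Metric.mem_ball_self hr)
    filter_upwards [Metric.ball_mem_nhds q hr] with y hy using hcst y hy
  intro q hq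
  set V := {y | y ∈ U ∧ F y = F q₀} with hV
  set W := {y | y ∈ U ∧ F y ≠ F q₀} with hW
  have hVopen : IsOpen V := by
    rw [isOpen_iff_mem_nhds]
    rintro y ⟨hyU, hyF⟩
    filter_upwards [hloc y hyU, hU.mem_nhds hyU] with z hz hzU
    exact ⟨hzU, hz.trans hyF⟩
  have hWopen : IsOpen W := by
    rw [isOpen_iff_mem_nhds]
    rintro y ⟨hyU, hyF⟩
    filter_upwards [hloc y hyU, hU.mem_nhds hyU] with z hz hzU
    exact ⟨hzU, hz ▸ hyF⟩
  by_contra hne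
  obtain ⟨z, hzU, hzV, hzW⟩ := hc V W hVopen hWopen
    (fun y hy => by by_cases h : F y = F q₀
                    · exact Or.inl ⟨hy, h⟩
                    · exact Or.inr ⟨hy, h⟩)
    ⟨q₀, hq₀, hq₀, rfl⟩ ⟨q, hq, hq, hne⟩
  exact hzW.2 hzV.2

lemma aux0_stmt10 {G : ℝ × ℝ → ℝ} {L : ℝ × ℝ →L[ℝ] ℝ} {q : ℝ × ℝ} {a b b4 b1 : ℝ}
    (hr : 0 < q.1) (hw : 0 < b4 * q.2 + b1) (hG : HasFDerivAt G L q)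
    (hX : q.1 * L (1, 0) = a * G q) (hY : (b4 * q.2 + b1) * L (0, 1) = b * b4 * G q) :
    HasFDerivAt (fun p => G p * p.1 ^ (-a) * (b4 * p.2 + b1) ^ (-b)) (0 : ℝ × ℝ →L[ℝ] ℝ) q := by
  have h_ra : HasFDerivAt (fun p : ℝ × ℝ => p.1 ^ (-a))
      ((-a * q.1 ^ (-a - 1)) • ContinuousLinearMap.fst ℝ ℝ ℝ) q :=
    (Real.hasDerivAt_rpow_const (p := -a) (Or.inl hr.ne')).comp_hasFDerivAt q hasFDerivAt_fst
  have h_w : HasFDerivAt (fun p : ℝ × ℝ => b4 * p.2 + b1)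
      (b4 • ContinuousLinearMap.snd ℝ ℝ ℝ) q :=
    (hasFDerivAt_snd.const_mul b4).add_const b1
  have h_wb : HasFDerivAt (fun p : ℝ × ℝ => (b4 * p.2 + b1) ^ (-b))
      ((-b * (b4 * q.2 + b1) ^ (-b - 1)) • (b4 • ContinuousLinearMap.snd ℝ ℝ ℝ)) q :=
    by have := (Real.hasDerivAt_rpow_const (p := -b) (Or.inl hw.ne')).comp_hasFDerivAt q h_w; exact this
  have total := (hG.mul h_ra).mul h_wb
  refine total.congr_fderiv (Eq.symm ?_)
  symm
  refine ContinuousLinearMap.ext fun v => ?_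
  simp only [ContinuousLinearMap.add_apply, ContinuousLinearMap.smul_apply,
    ContinuousLinearMap.coe_fst', ContinuousLinearMap.coe_snd', smul_eq_mul,
    ContinuousLinearMap.zero_apply, Pi.mul_apply]
  have hra : q.1 ^ (-a) = q.1 ^ (-a - 1) * q.1 := by
    rw [← Real.rpow_add_one hr.ne']; ring_nf
  have hwb : (b4 * q.2 + b1) ^ (-b) = (b4 * q.2 + b1) ^ (-b - 1) * (b4 * q.2 + b1) := by
    rw [← Real.rpow_add_one hw.ne']; ring_nf
  have hv : L v = v.1 * L (1, 0) + v.2 * L (0, 1) := by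
    have : v = v.1 • ((1 : ℝ), (0 : ℝ)) + v.2 • ((0 : ℝ), (1 : ℝ)) := by
      simp [Prod.ext_iff]
    rw [this, map_add, map_smul, map_smul]; simp
  rw [hv, hra, hwb]
  linear_combination (q.1 ^ (-a - 1) * (b4 * q.2 + b1) ^ (-b - 1) * (b4 * q.2 + b1) * v.1) * hX
    + (q.1 ^ (-a - 1) * q.1 * (b4 * q.2 + b1) ^ (-b - 1) * v.2) * hY

/-- Thermodynamic states of the Euler system on a plane admitting a two-dimensional
commutative symmetry algebra (special case): the invariant states have
`p = C₁ρ^{ς₂/(ς₁+ς₂)}(β₄s+β₁)^{(ς₃+ς₂)/(ς₁+ς₂)} − β₂/β₅` and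
`T = C₂ρ^{−ς₁/(ς₁+ς₂)}(β₄s+β₁)^{(ς₃−ς₁)/(ς₁+ς₂)}`. -/
theorem stmt_10 (a1 a2 a3 a4 a5 a6 b1 b2 b3 b4 b5 b6 s1 s2 s3 : ℝ)
    (hb4 : b4 ≠ 0) (hb5 : b5 ≠ 0)
    (ha1 : a1 = a4 * b1 / b4) (ha2 : a2 = a5 * b2 / b5)
    (ha3 : a3 = a5 - a4 - a6) (hb3 : b3 = b5 - b4 - b6)
    (hs1 : s1 = a6 * b4 - a4 * b6) (hs2 : s2 = a4 * b5 - a5 * b4)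
    (hs3 : s3 = a6 * b5 - a5 * b6)
    (hden : s1 + s2 ≠ 0) (hs2ne : s2 ≠ 0)
    (U : Set (ℝ × ℝ)) (hU : IsOpen U) (hconn : IsConnected U) (hne : U.Nonempty)
    (hUsub : U ⊆ {q : ℝ × ℝ | 0 < q.1 ∧ 0 < b4 * q.2 + b1})
    (ε : ℝ → ℝ → ℝ) (hε : ContDiffOn ℝ (⊤ : ℕ∞) (Function.uncurry ε) U)
    (hεs : ∀ q ∈ U, 0 < pderivS ε q.1 q.2)
    (hpde1 : ∀ q ∈ U,
      a3 * q.1 * pderivR (pderivR ε) q.1 q.2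
        + (a4 * q.2 + a1) * pderivS (pderivR ε) q.1 q.2
        + (2 * a3 - a5) * pderivR ε q.1 q.2 - a2 / q.1 ^ 2 = 0)
    (hpde2 : ∀ q ∈ U,
      b3 * q.1 * pderivR (pderivR ε) q.1 q.2
        + (b4 * q.2 + b1) * pderivS (pderivR ε) q.1 q.2
        + (2 * b3 - b5) * pderivR ε q.1 q.2 - b2 / q.1 ^ 2 = 0)
    (hpde3 : ∀ q ∈ U,
      (a4 * q.2 + a1) * pderivS (pderivS ε) q.1 q.2
        + a3 * q.1 * pderivS (pderivR ε) q.1 q.2 - a6 * pderivS ε q.1 q.2 = 0)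
    (hpde4 : ∀ q ∈ U,
      (b4 * q.2 + b1) * pderivS (pderivS ε) q.1 q.2
        + b3 * q.1 * pderivS (pderivR ε) q.1 q.2 - b6 * pderivS ε q.1 q.2 = 0) :
    ∃ C1 C2 : ℝ, ∀ q ∈ U,
      q.1 ^ 2 * pderivR ε q.1 q.2
        = C1 * q.1 ^ (s2 / (s1 + s2)) * (b4 * q.2 + b1) ^ ((s3 + s2) / (s1 + s2))
          - b2 / b5 ∧
      pderivS ε q.1 q.2
        = C2 * q.1 ^ (-s1 / (s1 + s2)) * (b4 * q.2 + b1) ^ ((s3 - s1) / (s1 + s2)) := by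
  set f := Function.uncurry ε with hfdef
  set Dε := fderiv ℝ f with hDεdef
  have hDεsm : ContDiffOn ℝ (⊤ : ℕ∞) Dε U := hε.fderiv_of_isOpen hU (by simp)
  set D1 : ℝ × ℝ → ℝ := fun q => Dε q (1, 0) with hD1def
  set D2 : ℝ × ℝ → ℝ := fun q => Dε q (0, 1) with hD2def
  have hD1sm : ContDiffOn ℝ (⊤ : ℕ∞) D1 U := hDεsm.clm_apply contDiffOn_const
  have hD2sm : ContDiffOn ℝ (⊤ : ℕ∞) D2 U := hDεsm.clm_apply contDiffOn_const
  have hfd : ∀ q ∈ U, DifferentiableAt ℝ f q := fun q hq =>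
    (hε.differentiableOn (by simp)).differentiableAt (hU.mem_nhds hq)
  have hD1d : ∀ q ∈ U, DifferentiableAt ℝ D1 q := fun q hq =>
    (hD1sm.differentiableOn (by simp)).differentiableAt (hU.mem_nhds hq)
  have hD2d : ∀ q ∈ U, DifferentiableAt ℝ D2 q := fun q hq =>
    (hD2sm.differentiableOn (by simp)).differentiableAt (hU.mem_nhds hq)
  have hDεd : ∀ q ∈ U, DifferentiableAt ℝ Dε q := fun q hq =>
    (hDεsm.differentiableOn (by simp)).differentiableAt (hU.mem_nhds hq)
  have key1 : ∀ q ∈ U, pderivR ε q.1 q.2 = D1 q := by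
    intro q hq
    have hcurve : HasDerivAt (fun x : ℝ => (x, q.2)) ((1 : ℝ), (0 : ℝ)) q.1 :=
      (hasDerivAt_id q.1).prodMk (hasDerivAt_const q.1 q.2)
    exact ((hfd q hq).hasFDerivAt.comp_hasDerivAt q.1 hcurve).deriv
  have key2 : ∀ q ∈ U, pderivS ε q.1 q.2 = D2 q := by
    intro q hq
    have hcurve : HasDerivAt (fun y : ℝ => (q.1, y)) ((0 : ℝ), (1 : ℝ)) q.2 :=
      (hasDerivAt_const q.2 q.1).prodMk (hasDerivAt_id q.2)
    exact ((hfd q hq).hasFDerivAt.comp_hasDerivAt q.2 hcurve).deriv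
  have keyRR : ∀ q ∈ U, pderivR (pderivR ε) q.1 q.2 = fderiv ℝ D1 q (1, 0) := by
    intro q hq
    have hmem : {x : ℝ | (x, q.2) ∈ U} ∈ nhds q.1 := by
      have hcont : ContinuousAt (fun x : ℝ => (x, q.2)) q.1 := by fun_prop
      exact hcont (hU.mem_nhds hq)
    have heq : (fun x => pderivR ε x q.2) =ᶠ[nhds q.1] (fun x => D1 (x, q.2)) := by
      filter_upwards [hmem] with x hx using key1 (x, q.2) hx
    have hcurve : HasDerivAt (fun x : ℝ => (x, q.2)) ((1 : ℝ), (0 : ℝ)) q.1 :=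
      (hasDerivAt_id q.1).prodMk (hasDerivAt_const q.1 q.2)
    have h2 := (hD1d q hq).hasFDerivAt.comp_hasDerivAt q.1 hcurve
    calc deriv (fun x => pderivR ε x q.2) q.1
        = deriv (fun x => D1 (x, q.2)) q.1 := heq.deriv_eq
      _ = fderiv ℝ D1 q (1, 0) := h2.deriv
  have keyRS : ∀ q ∈ U, pderivS (pderivR ε) q.1 q.2 = fderiv ℝ D1 q (0, 1) := by
    intro q hq
    have hmem : {y : ℝ | (q.1, y) ∈ U} ∈ nhds q.2 := by
      have hcont : ContinuousAt (fun y : ℝ => (q.1, y)) q.2 := by fun_prop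
      exact hcont (hU.mem_nhds hq)
    have heq : (fun y => pderivR ε q.1 y) =ᶠ[nhds q.2] (fun y => D1 (q.1, y)) := by
      filter_upwards [hmem] with y hy using key1 (q.1, y) hy
    have hcurve : HasDerivAt (fun y : ℝ => (q.1, y)) ((0 : ℝ), (1 : ℝ)) q.2 :=
      (hasDerivAt_const q.2 q.1).prodMk (hasDerivAt_id q.2)
    have h2 := (hD1d q hq).hasFDerivAt.comp_hasDerivAt q.2 hcurve
    calc deriv (fun y => pderivR ε q.1 y) q.2
        = deriv (fun y => D1 (q.1, y)) q.2 := heq.deriv_eq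
      _ = fderiv ℝ D1 q (0, 1) := h2.deriv
  have keySS : ∀ q ∈ U, pderivS (pderivS ε) q.1 q.2 = fderiv ℝ D2 q (0, 1) := by
    intro q hq
    have hmem : {y : ℝ | (q.1, y) ∈ U} ∈ nhds q.2 := by
      have hcont : ContinuousAt (fun y : ℝ => (q.1, y)) q.2 := by fun_prop
      exact hcont (hU.mem_nhds hq)
    have heq : (fun y => pderivS ε q.1 y) =ᶠ[nhds q.2] (fun y => D2 (q.1, y)) := by
      filter_upwards [hmem] with y hy using key2 (q.1, y) hy
    have hcurve : HasDerivAt (fun y : ℝ => (q.1, y)) ((0 : ℝ), (1 : ℝ)) q.2 :=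
      (hasDerivAt_const q.2 q.1).prodMk (hasDerivAt_id q.2)
    have h2 := (hD2d q hq).hasFDerivAt.comp_hasDerivAt q.2 hcurve
    calc deriv (fun y => pderivS ε q.1 y) q.2
        = deriv (fun y => D2 (q.1, y)) q.2 := heq.deriv_eq
      _ = fderiv ℝ D2 q (0, 1) := h2.deriv
  have keySym : ∀ q ∈ U, fderiv ℝ D2 q (1, 0) = fderiv ℝ D1 q (0, 1) := by
    intro q hq
    have hsym : IsSymmSndFDerivAt ℝ f q := by
      refine (hε.contDiffAt (hU.mem_nhds hq)).isSymmSndFDerivAt ?_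
      rw [minSmoothness_of_isRCLikeNormedField]
      exact WithTop.coe_le_coe.2 (le_top : (2:ℕ∞) ≤ ⊤)
    have h1 : fderiv ℝ (fun p => Dε p ((0:ℝ),(1:ℝ))) q = (fderiv ℝ Dε q).flip (0, 1) := by
      have h := ((hDεd q hq).hasFDerivAt.clm_apply (hasFDerivAt_const ((0:ℝ),(1:ℝ)) q)).fderiv
      rw [h, ContinuousLinearMap.comp_zero, zero_add]
    have h2 : fderiv ℝ (fun p => Dε p ((1:ℝ),(0:ℝ))) q = (fderiv ℝ Dε q).flip (1, 0) := by
      have h := ((hDεd q hq).hasFDerivAt.clm_apply (hasFDerivAt_const ((1:ℝ),(0:ℝ)) q)).fderiv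
      rw [h, ContinuousLinearMap.comp_zero, zero_add]
    show fderiv ℝ (fun p => Dε p ((0:ℝ),(1:ℝ))) q (1, 0)
        = fderiv ℝ (fun p => Dε p ((1:ℝ),(0:ℝ))) q (0, 1)
    rw [h1, h2]
    simpa using hsym.eq (1, 0) (0, 1)
  -- the two invariant functions
  set F1 : ℝ × ℝ → ℝ := fun p =>
    (p.1 ^ 2 * D1 p + b2 / b5) * p.1 ^ (-(s2 / (s1 + s2)))
      * (b4 * p.2 + b1) ^ (-((s3 + s2) / (s1 + s2))) with hF1def
  set F2 : ℝ × ℝ → ℝ := fun p =>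
    D2 p * p.1 ^ (-(-s1 / (s1 + s2)))
      * (b4 * p.2 + b1) ^ (-((s3 - s1) / (s1 + s2))) with hF2def
  have hzero1 : ∀ q ∈ U, HasFDerivAt F1 (0 : ℝ × ℝ →L[ℝ] ℝ) q := by
    intro q hq
    obtain ⟨hr, hw⟩ := hUsub hq
    have hD1at : HasFDerivAt D1 (fderiv ℝ D1 q) q := (hD1d q hq).hasFDerivAt
    have hsq : HasFDerivAt (fun p : ℝ × ℝ => p.1 ^ 2)
        (((2 : ℕ) * q.1 ^ 1 : ℝ) • ContinuousLinearMap.fst ℝ ℝ ℝ) q :=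
      (hasDerivAt_pow 2 q.1).comp_hasFDerivAt q hasFDerivAt_fst
    have hG := (hsq.mul hD1at).add_const (b2 / b5)
    refine aux0_stmt10 hr hw hG ?_ ?_
    · simp only [ContinuousLinearMap.add_apply, ContinuousLinearMap.smul_apply,
        ContinuousLinearMap.coe_fst', ContinuousLinearMap.coe_snd', smul_eq_mul,
        Nat.cast_ofNat, pow_one]
      have H1 := hpde1 q hq
      have H2 := hpde2 q hq
      rw [keyRR q hq, keyRS q hq, key1 q hq] at H1 H2
      rw [ha1, ha2, ha3] at H1
      rw [hb3] at H2
      field_simp at H1 H2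
      have T1 : (s1 + s2) * (q.1 * (q.1 ^ 2 * fderiv ℝ D1 q (1, 0) + D1 q * (2 * q.1 * 1))) * b5
          = s2 * (q.1 ^ 2 * D1 q * b5 + b2) := by
        linear_combination (-1) * H1 + (a4 * b5) * H2
          + ((q.1 * (q.1 ^ 2 * fderiv ℝ D1 q (1, 0) + D1 q * (2 * q.1 * 1))) * b5) * hs1
          + ((q.1 * (q.1 ^ 2 * fderiv ℝ D1 q (1, 0) + D1 q * (2 * q.1 * 1))) * b5
              - (q.1 ^ 2 * D1 q * b5 + b2)) * hs2
      field_simp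
      linear_combination T1
    · simp only [ContinuousLinearMap.add_apply, ContinuousLinearMap.smul_apply,
        ContinuousLinearMap.coe_fst', ContinuousLinearMap.coe_snd', smul_eq_mul,
        Nat.cast_ofNat, pow_one]
      have H1 := hpde1 q hq
      have H2 := hpde2 q hq
      rw [keyRR q hq, keyRS q hq, key1 q hq] at H1 H2
      rw [ha1, ha2, ha3] at H1
      rw [hb3] at H2
      field_simp at H1 H2
      have T2 : (s1 + s2) * ((b4 * q.2 + b1) * (q.1 ^ 2 * fderiv ℝ D1 q (0, 1)
            + D1 q * (2 * q.1 * 0))) * b5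
          = (s3 + s2) * b4 * (q.1 ^ 2 * D1 q * b5 + b2) := by
        linear_combination (b5 - b4 - b6) * H1 - ((a5 - a4 - a6) * b4 * b5) * H2
          + (((b4 * q.2 + b1) * (q.1 ^ 2 * fderiv ℝ D1 q (0, 1) + D1 q * (2 * q.1 * 0))) * b5) * hs1
          + (((b4 * q.2 + b1) * (q.1 ^ 2 * fderiv ℝ D1 q (0, 1) + D1 q * (2 * q.1 * 0))) * b5
              - b4 * (q.1 ^ 2 * D1 q * b5 + b2)) * hs2
          + (- b4 * (q.1 ^ 2 * D1 q * b5 + b2)) * hs3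
      field_simp
      linear_combination T2
  have hzero2 : ∀ q ∈ U, HasFDerivAt F2 (0 : ℝ × ℝ →L[ℝ] ℝ) q := by
    intro q hq
    obtain ⟨hr, hw⟩ := hUsub hq
    have hD2at : HasFDerivAt D2 (fderiv ℝ D2 q) q := (hD2d q hq).hasFDerivAt
    refine aux0_stmt10 hr hw hD2at ?_ ?_
    · have H3 := hpde3 q hq
      have H4 := hpde4 q hq
      rw [keySS q hq, keyRS q hq, key2 q hq] at H3 H4
      rw [← keySym q hq] at H3 H4
      rw [ha1, ha3] at H3
      rw [hb3] at H4
      field_simp at H3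
      have T3 : (s1 + s2) * (q.1 * fderiv ℝ D2 q (1, 0)) = -s1 * D2 q := by
        linear_combination (-1) * H3 + a4 * H4
          + (q.1 * fderiv ℝ D2 q (1, 0) + D2 q) * hs1
          + (q.1 * fderiv ℝ D2 q (1, 0)) * hs2
      field_simp
      linear_combination T3
    · have H3 := hpde3 q hq
      have H4 := hpde4 q hq
      rw [keySS q hq, keyRS q hq, key2 q hq] at H3 H4
      rw [ha1, ha3] at H3
      rw [hb3] at H4
      field_simp at H3
      have T4 : (s1 + s2) * ((b4 * q.2 + b1) * fderiv ℝ D2 q (0, 1))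
          = (s3 - s1) * b4 * D2 q := by
        linear_combination (b5 - b4 - b6) * H3 - ((a5 - a4 - a6) * b4) * H4
          + ((b4 * q.2 + b1) * fderiv ℝ D2 q (0, 1) + b4 * D2 q) * hs1
          + ((b4 * q.2 + b1) * fderiv ℝ D2 q (0, 1)) * hs2
          + (- b4 * D2 q) * hs3
      field_simp
      linear_combination T4
  obtain ⟨q₀, hq₀⟩ := hne
  have hC1 := myconst_stmt10 hU hconn.isPreconnected hq₀ hzero1
  have hC2 := myconst_stmt10 hU hconn.isPreconnected hq₀ hzero2
  refine ⟨F1 q₀, F2 q₀, fun q hq => ?_⟩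
  obtain ⟨hr, hw⟩ := hUsub hq
  have h1 : (q.1 ^ 2 * D1 q + b2 / b5) * q.1 ^ (-(s2 / (s1 + s2)))
      * (b4 * q.2 + b1) ^ (-((s3 + s2) / (s1 + s2))) = F1 q₀ := hC1 q hq
  have h2 : D2 q * q.1 ^ (-(-s1 / (s1 + s2)))
      * (b4 * q.2 + b1) ^ (-((s3 - s1) / (s1 + s2))) = F2 q₀ := hC2 q hq
  have hrp1 : (0:ℝ) < q.1 ^ (s2 / (s1 + s2)) := Real.rpow_pos_of_pos hr _
  have hrp2 : (0:ℝ) < (b4 * q.2 + b1) ^ ((s3 + s2) / (s1 + s2)) := Real.rpow_pos_of_pos hw _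
  have hrp3 : (0:ℝ) < q.1 ^ (-s1 / (s1 + s2)) := Real.rpow_pos_of_pos hr _
  have hrp4 : (0:ℝ) < (b4 * q.2 + b1) ^ ((s3 - s1) / (s1 + s2)) := Real.rpow_pos_of_pos hw _
  rw [Real.rpow_neg hr.le, Real.rpow_neg hw.le] at h1 h2
  constructor
  · rw [key1 q hq]
    have keyA : q.1 ^ 2 * D1 q + b2 / b5
        = F1 q₀ * q.1 ^ (s2 / (s1 + s2)) * (b4 * q.2 + b1) ^ ((s3 + s2) / (s1 + s2)) := by
      rw [← h1]; field_simp [hrp1.ne', hrp2.ne']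
    linear_combination keyA
  · rw [key2 q hq]
    have keyB : D2 q
        = F2 q₀ * q.1 ^ (-s1 / (s1 + s2)) * (b4 * q.2 + b1) ^ ((s3 - s1) / (s1 + s2)) := by
      rw [← h2]; field_simp [hrp3.ne', hrp4.ne']
    linear_combination keyB
end

section
/- Let λ₁,…,λ₅ be real numbers with λ₄ ≠ 0, λ₅ ≠ 0, 2λ₄ − λ₅ ≠ 0 and λ₃ + λ₄ − 2λ₅ ≠ 0. Let U be a nonempty connected open subset of {(ρ,s) : ρ > 0, λ₁ − λ₄s > 0} and let ε : U → ℝ be smooth with ε_s > 0 on U, satisfying the PDE system: (2λ₄ − λ₅)ρ·ε_ρρ + (λ₁ − λ₄s)·ε_ρs + (4λ₄ − 3λ₅)·ε_ρ − λ₂/ρ² = 0 and (λ₁ − λ₄s)·ε_ss + (2λ₄ − λ₅)ρ·ε_ρs − λ₃·ε_s = 0 on U. Then there exist constants C₁, C₂ such that for all (ρ,s) ∈ U: ρ²·ε_ρ(ρ,s) = C₁·ρ^{λ₅/(2λ₄−λ₅)} − λ₂/λ₅ and ε_s(ρ,s) = C₂·(λ₁ − λ₄s)^{−λ₃/λ₄}.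 That is, thermodynamic states for the Euler system on a sphere admitting a one-dimensional symmetry algebra have pressure p = C₁ρ^{λ₅/(2λ₄−λ₅)} − λ₂/λ₅ and temperature T = C₂(λ₁ − λ₄s)^{−λ₃/λ₄}. -/
open Function Filter Set

lemma memU_right {U : Set (ℝ × ℝ)} (hU : IsOpen U) {r s : ℝ} (h : (r, s) ∈ U) :
    ∀ᶠ y in nhds s, (r, y) ∈ U := by
  have hc : ContinuousAt (fun y : ℝ => (r, y)) s := (continuous_const.prodMk continuous_id).continuousAt
  exact hc (hU.mem_nhds h)

lemma memU_left {U : Set (ℝ × ℝ)} (hU : IsOpen U) {r s : ℝ} (h : (r, s) ∈ U) :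
    ∀ᶠ x in nhds r, (x, s) ∈ U := by
  have hc : ContinuousAt (fun x : ℝ => (x, s)) r := (continuous_id.prodMk continuous_const).continuousAt
  exact hc (hU.mem_nhds h)

lemma hasDerivAt_lineR {r s : ℝ} : HasDerivAt (fun x : ℝ => (x, s)) ((1 : ℝ), (0 : ℝ)) r :=
  (hasDerivAt_id r).prodMk (hasDerivAt_const r s)

lemma hasDerivAt_lineS {r s : ℝ} : HasDerivAt (fun y : ℝ => (r, y)) ((0 : ℝ), (1 : ℝ)) s :=
  (hasDerivAt_const s r).prodMk (hasDerivAt_id s)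

lemma diffAt_of_contDiffOn {U : Set (ℝ × ℝ)} (hU : IsOpen U) {f : ℝ → ℝ → ℝ}
    (hf : ContDiffOn ℝ (⊤ : ℕ∞) (uncurry f) U) {r s : ℝ} (h : (r, s) ∈ U) :
    DifferentiableAt ℝ (uncurry f) (r, s) :=
  (hf.contDiffAt (hU.mem_nhds h)).differentiableAt (by simp)

lemma pderivR_eq_fderiv_s11 {U : Set (ℝ × ℝ)} (hU : IsOpen U) {f : ℝ → ℝ → ℝ}
    (hf : ContDiffOn ℝ (⊤ : ℕ∞) (uncurry f) U) {r s : ℝ} (h : (r, s) ∈ U) :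
    pderivR f r s = fderiv ℝ (uncurry f) (r, s) (1, 0) := by
  have hd := diffAt_of_contDiffOn hU hf h
  have := hd.hasFDerivAt.comp_hasDerivAt r hasDerivAt_lineR
  exact this.deriv

lemma pderivS_eq_fderiv_s11 {U : Set (ℝ × ℝ)} (hU : IsOpen U) {f : ℝ → ℝ → ℝ}
    (hf : ContDiffOn ℝ (⊤ : ℕ∞) (uncurry f) U) {r s : ℝ} (h : (r, s) ∈ U) :
    pderivS f r s = fderiv ℝ (uncurry f) (r, s) (0, 1) := by
  have hd := diffAt_of_contDiffOn hU hf h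
  have := hd.hasFDerivAt.comp_hasDerivAt s hasDerivAt_lineS
  exact this.deriv

lemma hasDerivAt_pR {U : Set (ℝ × ℝ)} (hU : IsOpen U) {f : ℝ → ℝ → ℝ}
    (hf : ContDiffOn ℝ (⊤ : ℕ∞) (uncurry f) U) {r s : ℝ} (h : (r, s) ∈ U) :
    HasDerivAt (fun x => f x s) (pderivR f r s) r := by
  have hd := diffAt_of_contDiffOn hU hf h
  exact (hd.hasFDerivAt.comp_hasDerivAt r hasDerivAt_lineR).congr_deriv
    (pderivR_eq_fderiv_s11 hU hf h).symm

lemma hasDerivAt_pS {U : Set (ℝ × ℝ)} (hU : IsOpen U) {f : ℝ → ℝ → ℝ}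
    (hf : ContDiffOn ℝ (⊤ : ℕ∞) (uncurry f) U) {r s : ℝ} (h : (r, s) ∈ U) :
    HasDerivAt (fun y => f r y) (pderivS f r s) s := by
  have hd := diffAt_of_contDiffOn hU hf h
  exact (hd.hasFDerivAt.comp_hasDerivAt s hasDerivAt_lineS).congr_deriv
    (pderivS_eq_fderiv_s11 hU hf h).symm

lemma contDiffOn_pR {U : Set (ℝ × ℝ)} (hU : IsOpen U) {f : ℝ → ℝ → ℝ}
    (hf : ContDiffOn ℝ (⊤ : ℕ∞) (uncurry f) U) :
    ContDiffOn ℝ (⊤ : ℕ∞) (uncurry (pderivR f)) U := by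
  have hfd : ContDiffOn ℝ (⊤ : ℕ∞) (fderiv ℝ (uncurry f)) U := hf.fderiv_of_isOpen hU (by simp)
  have h2 : ContDiffOn ℝ (⊤ : ℕ∞) (fun q => fderiv ℝ (uncurry f) q ((1 : ℝ), (0 : ℝ))) U :=
    (ContinuousLinearMap.apply ℝ ℝ ((1 : ℝ), (0 : ℝ))).contDiff.comp_contDiffOn hfd
  exact h2.congr fun q hq => by
    have : (q.1, q.2) ∈ U := by simpa using hq
    exact (pderivR_eq_fderiv_s11 hU hf this)

lemma contDiffOn_pS {U : Set (ℝ × ℝ)} (hU : IsOpen U) {f : ℝ → ℝ → ℝ}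
    (hf : ContDiffOn ℝ (⊤ : ℕ∞) (uncurry f) U) :
    ContDiffOn ℝ (⊤ : ℕ∞) (uncurry (pderivS f)) U := by
  have hfd : ContDiffOn ℝ (⊤ : ℕ∞) (fderiv ℝ (uncurry f)) U := hf.fderiv_of_isOpen hU (by simp)
  have h2 : ContDiffOn ℝ (⊤ : ℕ∞) (fun q => fderiv ℝ (uncurry f) q ((0 : ℝ), (1 : ℝ))) U :=
    (ContinuousLinearMap.apply ℝ ℝ ((0 : ℝ), (1 : ℝ))).contDiff.comp_contDiffOn hfd
  exact h2.congr fun q hq => by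
    have : (q.1, q.2) ∈ U := by simpa using hq
    exact (pderivS_eq_fderiv_s11 hU hf this)

set_option maxHeartbeats 1000000 in
lemma pderiv_comm {U : Set (ℝ × ℝ)} (hU : IsOpen U) {f : ℝ → ℝ → ℝ}
    (hf : ContDiffOn ℝ (⊤ : ℕ∞) (uncurry f) U) {r s : ℝ} (h : (r, s) ∈ U) :
    pderivS (pderivR f) r s = pderivR (pderivS f) r s := by
  set F := uncurry f with hF
  set F' := fderiv ℝ F with hF'
  have hfd : ContDiffOn ℝ (⊤ : ℕ∞) F' U := hf.fderiv_of_isOpen hU (by simp)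
  have hF'' : HasFDerivAt F' (fderiv ℝ F' (r, s)) (r, s) :=
    ((hfd.contDiffAt (hU.mem_nhds h)).differentiableAt (by simp)).hasFDerivAt
  have hev : ∀ᶠ y in nhds ((r, s) : ℝ × ℝ), HasFDerivAt F (F' y) y := by
    filter_upwards [hU.mem_nhds h] with y hy
    exact (diffAt_of_contDiffOn hU hf (by simpa using hy)).hasFDerivAt
  have hsymm := second_derivative_symmetric_of_eventually hev hF''
  -- compute pderivS (pderivR f) r s
  have e1 : pderivS (pderivR f) r s = fderiv ℝ F' (r, s) (0, 1) (1, 0) := by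
    have heq : (fun y => pderivR f r y) =ᶠ[nhds s] fun y => F' (r, y) (1, 0) := by
      filter_upwards [memU_right hU h] with y hy
      exact pderivR_eq_fderiv_s11 hU hf hy
    have hD : HasDerivAt (fun y => F' (r, y) (1, 0))
        (fderiv ℝ F' (r, s) (0, 1) (1, 0) + F' (r, s) 0) s :=
      (hF''.comp_hasDerivAt s hasDerivAt_lineS).clm_apply (hasDerivAt_const s _)
    have := hD.deriv
    simp only [map_zero, add_zero] at this
    calc pderivS (pderivR f) r s = deriv (fun y => F' (r, y) (1, 0)) s := heq.deriv_eq
    _ = _ := this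
  have e2 : pderivR (pderivS f) r s = fderiv ℝ F' (r, s) (1, 0) (0, 1) := by
    have heq : (fun x => pderivS f x s) =ᶠ[nhds r] fun x => F' (x, s) (0, 1) := by
      filter_upwards [memU_left hU h] with x hx
      exact pderivS_eq_fderiv_s11 hU hf hx
    have hD : HasDerivAt (fun x => F' (x, s) (0, 1))
        (fderiv ℝ F' (r, s) (1, 0) (0, 1) + F' (r, s) 0) r :=
      (hF''.comp_hasDerivAt r hasDerivAt_lineR).clm_apply (hasDerivAt_const r _)
    have := hD.deriv
    simp only [map_zero, add_zero] at this
    calc pderivR (pderivS f) r s = deriv (fun x => F' (x, s) (0, 1)) r := heq.deriv_eq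
    _ = _ := this
  rw [e1, e2, hsymm (0, 1) (1, 0)]

lemma clm_eq_zero (L : ℝ × ℝ →L[ℝ] ℝ) (h1 : L (1, 0) = 0) (h2 : L (0, 1) = 0) : L = 0 := by
  ext
  · simpa using h1
  · simpa using h2

lemma hasFDerivAt_zero_of_partials {g : ℝ × ℝ → ℝ} {r s : ℝ}
    (hg : DifferentiableAt ℝ g (r, s))
    (h1 : deriv (fun x => g (x, s)) r = 0)
    (h2 : deriv (fun y => g (r, y)) s = 0) : HasFDerivAt g (0 : ℝ × ℝ →L[ℝ] ℝ) (r, s) := by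
  have hline1 : HasDerivAt (fun x : ℝ => (x, s)) ((1 : ℝ), (0 : ℝ)) r :=
    (hasDerivAt_id r).prodMk (hasDerivAt_const r s)
  have hline2 : HasDerivAt (fun y : ℝ => (r, y)) ((0 : ℝ), (1 : ℝ)) s :=
    (hasDerivAt_const s r).prodMk (hasDerivAt_id s)
  have e1 : fderiv ℝ g (r, s) (1, 0) = 0 := by
    rw [← (hg.hasFDerivAt.comp_hasDerivAt r hline1).deriv]; exact h1
  have e2 : fderiv ℝ g (r, s) (0, 1) = 0 := by
    rw [← (hg.hasFDerivAt.comp_hasDerivAt s hline2).deriv]; exact h2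
  have : fderiv ℝ g (r, s) = 0 := clm_eq_zero _ e1 e2
  simpa [this] using hg.hasFDerivAt

lemma const_of_fderiv_zero {U : Set (ℝ × ℝ)} (hU : IsOpen U) (hconn : IsPreconnected U)
    {g : ℝ × ℝ → ℝ} (hg : ∀ q ∈ U, HasFDerivAt g (0 : ℝ × ℝ →L[ℝ] ℝ) q) :
    ∀ p ∈ U, ∀ q ∈ U, g p = g q := by
  intro p hp q hq
  haveI : PreconnectedSpace U := Subtype.preconnectedSpace hconn
  have hloc : IsLocallyConstant fun x : U => g x := by
    rw [IsLocallyConstant.iff_exists_open]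
    rintro ⟨x, hx⟩
    obtain ⟨δ, hδ, hball⟩ := Metric.isOpen_iff.1 hU x hx
    refine ⟨Subtype.val ⁻¹' Metric.ball x δ, isOpen_induced (Metric.isOpen_ball), by simpa using hδ, ?_⟩
    rintro ⟨y, hy⟩ hyb
    have hconv : Convex ℝ (Metric.ball x δ) := convex_ball x δ
    refine hconv.is_const_of_fderivWithin_eq_zero (fun z hz => ((hg z (hball hz)).differentiableAt).differentiableWithinAt) (fun z hz => ?_) (by simpa using hyb) (by simpa using hδ)
    rw [fderivWithin_of_isOpen Metric.isOpen_ball hz]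
    exact (hg z (hball hz)).fderiv
  exact hloc.apply_eq_of_preconnectedSpace ⟨p, hp⟩ ⟨q, hq⟩

/-- Thermodynamic states of the Euler system on a sphere admitting a one-dimensional
symmetry algebra (generic parameters): the invariant states have
`p = ρ²ε_ρ = C₁ρ^{λ₅/(2λ₄−λ₅)} − λ₂/λ₅` and `T = ε_s = C₂(λ₁−λ₄s)^{−λ₃/λ₄}`. -/
theorem stmt_11 (l1 l2 l3 l4 l5 : ℝ)
    (h4 : l4 ≠ 0) (h5 : l5 ≠ 0) (h45 : 2 * l4 - l5 ≠ 0)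
    (hgen : l3 + l4 - 2 * l5 ≠ 0)
    (U : Set (ℝ × ℝ)) (hU : IsOpen U) (hconn : IsConnected U) (hne : U.Nonempty)
    (hUsub : U ⊆ {q : ℝ × ℝ | 0 < q.1 ∧ 0 < l1 - l4 * q.2})
    (ε : ℝ → ℝ → ℝ) (hε : ContDiffOn ℝ (⊤ : ℕ∞) (Function.uncurry ε) U)
    (hεs : ∀ q ∈ U, 0 < pderivS ε q.1 q.2)
    (hpde1 : ∀ q ∈ U,
      (2 * l4 - l5) * q.1 * pderivR (pderivR ε) q.1 q.2
        + (l1 - l4 * q.2) * pderivS (pderivR ε) q.1 q.2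
        + (4 * l4 - 3 * l5) * pderivR ε q.1 q.2 - l2 / q.1 ^ 2 = 0)
    (hpde2 : ∀ q ∈ U,
      (l1 - l4 * q.2) * pderivS (pderivS ε) q.1 q.2
        + (2 * l4 - l5) * q.1 * pderivS (pderivR ε) q.1 q.2
        - l3 * pderivS ε q.1 q.2 = 0) :
    ∃ C1 C2 : ℝ, ∀ q ∈ U,
      q.1 ^ 2 * pderivR ε q.1 q.2 = C1 * q.1 ^ (l5 / (2 * l4 - l5)) - l2 / l5 ∧
      pderivS ε q.1 q.2 = C2 * (l1 - l4 * q.2) ^ (-l3 / l4) := by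
  have hε1 : ContDiffOn ℝ (⊤ : ℕ∞) (uncurry (pderivR ε)) U := contDiffOn_pR hU hε
  have hε2 : ContDiffOn ℝ (⊤ : ℕ∞) (uncurry (pderivS ε)) U := contDiffOn_pS hU hε
  have hε11 : ContDiffOn ℝ (⊤ : ℕ∞) (uncurry (pderivR (pderivR ε))) U := contDiffOn_pR hU hε1
  have hε12 : ContDiffOn ℝ (⊤ : ℕ∞) (uncurry (pderivS (pderivR ε))) U := contDiffOn_pS hU hε1
  have hε22 : ContDiffOn ℝ (⊤ : ℕ∞) (uncurry (pderivS (pderivS ε))) U := contDiffOn_pS hU hε2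
  -- Step 1: the mixed partial derivative vanishes on U.
  have hu : ∀ q ∈ U, pderivS (pderivR ε) q.1 q.2 = 0 := by
    rintro ⟨r, s⟩ hq
    -- differentiate PDE1 with respect to s
    have hd1 : HasDerivAt (fun y => (2 * l4 - l5) * r * pderivR (pderivR ε) r y
          + (l1 - l4 * y) * pderivS (pderivR ε) r y
          + (4 * l4 - 3 * l5) * pderivR ε r y - l2 / r ^ 2)
        ((2 * l4 - l5) * r * pderivS (pderivR (pderivR ε)) r s
          + ((0 - l4 * 1) * pderivS (pderivR ε) r s
            + (l1 - l4 * s) * pderivS (pderivS (pderivR ε)) r s)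
          + (4 * l4 - 3 * l5) * pderivS (pderivR ε) r s) s := by
      exact ((((hasDerivAt_pS hU hε11 hq).const_mul ((2 * l4 - l5) * r)).add
        (((hasDerivAt_const s l1).sub ((hasDerivAt_id s).const_mul l4)).mul
          (hasDerivAt_pS hU hε12 hq))).add
        ((hasDerivAt_pS hU hε1 hq).const_mul (4 * l4 - 3 * l5))).sub_const (l2 / r ^ 2)
    have hev1 : (fun y => (2 * l4 - l5) * r * pderivR (pderivR ε) r y
          + (l1 - l4 * y) * pderivS (pderivR ε) r y
          + (4 * l4 - 3 * l5) * pderivR ε r y - l2 / r ^ 2) =ᶠ[nhds s] fun _ => 0 := by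
      filter_upwards [memU_right hU hq] with y hy
      exact hpde1 (r, y) hy
    have hV1 : (2 * l4 - l5) * r * pderivS (pderivR (pderivR ε)) r s
          + ((0 - l4 * 1) * pderivS (pderivR ε) r s
            + (l1 - l4 * s) * pderivS (pderivS (pderivR ε)) r s)
          + (4 * l4 - 3 * l5) * pderivS (pderivR ε) r s = 0 := by
      rw [← hd1.deriv]
      exact hev1.deriv_eq.trans (deriv_const s 0)
    -- differentiate PDE2 with respect to r
    have hd2 : HasDerivAt (fun x => (l1 - l4 * s) * pderivS (pderivS ε) x s
          + (2 * l4 - l5) * x * pderivS (pderivR ε) x s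
          - l3 * pderivS ε x s)
        ((l1 - l4 * s) * pderivR (pderivS (pderivS ε)) r s
          + ((2 * l4 - l5) * 1 * pderivS (pderivR ε) r s
            + (2 * l4 - l5) * r * pderivR (pderivS (pderivR ε)) r s)
          - l3 * pderivR (pderivS ε) r s) r := by
      exact (((hasDerivAt_pR hU hε22 hq).const_mul (l1 - l4 * s)).add
        (((hasDerivAt_id r).const_mul (2 * l4 - l5)).mul (hasDerivAt_pR hU hε12 hq))).sub
        ((hasDerivAt_pR hU hε2 hq).const_mul l3)
    have hev2 : (fun x => (l1 - l4 * s) * pderivS (pderivS ε) x s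
          + (2 * l4 - l5) * x * pderivS (pderivR ε) x s
          - l3 * pderivS ε x s) =ᶠ[nhds r] fun _ => 0 := by
      filter_upwards [memU_left hU hq] with x hx
      exact hpde2 (x, s) hx
    have hV2 : (l1 - l4 * s) * pderivR (pderivS (pderivS ε)) r s
          + ((2 * l4 - l5) * 1 * pderivS (pderivR ε) r s
            + (2 * l4 - l5) * r * pderivR (pderivS (pderivR ε)) r s)
          - l3 * pderivR (pderivS ε) r s = 0 := by
      rw [← hd2.deriv]
      exact hev2.deriv_eq.trans (deriv_const r 0)
    -- swaps of mixed partial derivatives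
    have hswap1 : pderivS (pderivR (pderivR ε)) r s = pderivR (pderivS (pderivR ε)) r s :=
      pderiv_comm hU hε1 hq
    have hswap2 : pderivS (pderivR ε) r s = pderivR (pderivS ε) r s := pderiv_comm hU hε hq
    have hswap3 : pderivS (pderivR (pderivS ε)) r s = pderivR (pderivS (pderivS ε)) r s :=
      pderiv_comm hU hε2 hq
    have hswap4 : pderivS (pderivR (pderivS ε)) r s = pderivS (pderivS (pderivR ε)) r s := by
      show deriv (fun y => pderivR (pderivS ε) r y) s = deriv (fun y => pderivS (pderivR ε) r y) s
      apply Filter.EventuallyEq.deriv_eq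
      filter_upwards [memU_right hU hq] with y hy
      exact (pderiv_comm hU hε hy).symm
    have hfin : (l3 + l4 - 2 * l5) * pderivS (pderivR ε) r s = 0 := by
      linear_combination hV1 - hV2 - ((2 * l4 - l5) * r) * hswap1
        + l3 * hswap2 - (l1 - l4 * s) * hswap3 + (l1 - l4 * s) * hswap4
    exact (mul_eq_zero.mp hfin).resolve_left hgen
  -- Step 2: the two invariant combinations have zero derivative on U.
  have hG1 : ∀ q ∈ U, HasFDerivAt
      (fun q : ℝ × ℝ => (q.1 ^ 2 * pderivR ε q.1 q.2 + l2 / l5) * q.1 ^ (-(l5 / (2 * l4 - l5))))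
      (0 : ℝ × ℝ →L[ℝ] ℝ) q := by
    rintro ⟨r, s⟩ hq
    obtain ⟨hr, hz⟩ := hUsub hq
    simp only [Set.mem_setOf_eq] at hr hz
    apply hasFDerivAt_zero_of_partials
    · exact ((((differentiableAt_fst.pow 2).mul (diffAt_of_contDiffOn hU hε1 hq)).add_const
        (l2 / l5)).mul (differentiableAt_fst.rpow_const (Or.inl hr.ne')))
    · -- derivative in ρ vanishes
      have hA : (2 * l4 - l5) * r * pderivR (pderivR ε) r s
          + (4 * l4 - 3 * l5) * pderivR ε r s - l2 / r ^ 2 = 0 := by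
        linear_combination hpde1 (r, s) hq - (l1 - l4 * s) * hu (r, s) hq
      have hX : pderivR (pderivR ε) r s
          = (l2 / r ^ 2 - (4 * l4 - 3 * l5) * pderivR ε r s) / ((2 * l4 - l5) * r) := by
        rw [eq_div_iff (mul_ne_zero h45 hr.ne')]
        linear_combination hA
      have hd : HasDerivAt
          (fun x => (x ^ 2 * pderivR ε x s + l2 / l5) * x ^ (-(l5 / (2 * l4 - l5))))
          (((↑2 * r ^ (2 - 1)) * pderivR ε r s + r ^ 2 * pderivR (pderivR ε) r s)
              * r ^ (-(l5 / (2 * l4 - l5)))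
            + (r ^ 2 * pderivR ε r s + l2 / l5)
              * (-(l5 / (2 * l4 - l5)) * r ^ (-(l5 / (2 * l4 - l5)) - 1))) r := by
        exact (((hasDerivAt_pow 2 r).mul (hasDerivAt_pR hU hε1 hq)).add_const (l2 / l5)).mul
          (Real.hasDerivAt_rpow_const (Or.inl hr.ne'))
      rw [hd.deriv]
      rw [show r ^ (-(l5 / (2 * l4 - l5)) - 1) = r ^ (-(l5 / (2 * l4 - l5))) / r by
        rw [Real.rpow_sub hr, Real.rpow_one]]
      rw [hX]
      field_simp
      ring
    · -- derivative in s vanishes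
      have hd : HasDerivAt
          (fun y => (r ^ 2 * pderivR ε r y + l2 / l5) * r ^ (-(l5 / (2 * l4 - l5))))
          ((r ^ 2 * pderivS (pderivR ε) r s) * r ^ (-(l5 / (2 * l4 - l5)))) s := by
        exact (((hasDerivAt_pS hU hε1 hq).const_mul (r ^ 2)).add_const (l2 / l5)).mul_const _
      rw [hd.deriv, hu (r, s) hq]
      ring
  have hG2 : ∀ q ∈ U, HasFDerivAt
      (fun q : ℝ × ℝ => pderivS ε q.1 q.2 * (l1 - l4 * q.2) ^ (l3 / l4))
      (0 : ℝ × ℝ →L[ℝ] ℝ) q := by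
    rintro ⟨r, s⟩ hq
    obtain ⟨hr, hz⟩ := hUsub hq
    simp only [Set.mem_setOf_eq] at hr hz
    apply hasFDerivAt_zero_of_partials
    · exact (diffAt_of_contDiffOn hU hε2 hq).mul
        (((differentiableAt_const l1).sub
          ((differentiableAt_const l4).mul differentiableAt_snd)).rpow_const (Or.inl hz.ne'))
    · -- derivative in ρ vanishes
      have hd : HasDerivAt (fun x => pderivS ε x s * (l1 - l4 * s) ^ (l3 / l4))
          (pderivR (pderivS ε) r s * (l1 - l4 * s) ^ (l3 / l4)) r :=
        (hasDerivAt_pR hU hε2 hq).mul_const _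
      rw [hd.deriv, ← pderiv_comm hU hε hq, hu (r, s) hq]
      ring
    · -- derivative in s vanishes
      have hB : (l1 - l4 * s) * pderivS (pderivS ε) r s = l3 * pderivS ε r s := by
        linear_combination hpde2 (r, s) hq - ((2 * l4 - l5) * r) * hu (r, s) hq
      have hss : pderivS (pderivS ε) r s = l3 * pderivS ε r s / (l1 - l4 * s) := by
        rw [eq_div_iff hz.ne']
        linear_combination hB
      have hd : HasDerivAt (fun y => pderivS ε r y * (l1 - l4 * y) ^ (l3 / l4))
          (pderivS (pderivS ε) r s * (l1 - l4 * s) ^ (l3 / l4)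
            + pderivS ε r s * ((0 - l4 * 1) * (l3 / l4) * (l1 - l4 * s) ^ (l3 / l4 - 1))) s := by
        exact (hasDerivAt_pS hU hε2 hq).mul
          (((hasDerivAt_const s l1).sub ((hasDerivAt_id s).const_mul l4)).rpow_const
            (Or.inl hz.ne'))
      rw [hd.deriv]
      rw [show (l1 - l4 * s) ^ (l3 / l4 - 1) = (l1 - l4 * s) ^ (l3 / l4) / (l1 - l4 * s) by
        rw [Real.rpow_sub hz, Real.rpow_one]]
      rw [hss]
      field_simp
      ring
  -- Step 3: conclude by constancy on the connected set U.
  obtain ⟨q₀, hq₀⟩ := hne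
  refine ⟨(q₀.1 ^ 2 * pderivR ε q₀.1 q₀.2 + l2 / l5) * q₀.1 ^ (-(l5 / (2 * l4 - l5))),
    pderivS ε q₀.1 q₀.2 * (l1 - l4 * q₀.2) ^ (l3 / l4), ?_⟩
  rintro ⟨r, s⟩ hq
  obtain ⟨hr, hz⟩ := hUsub hq
  simp only [Set.mem_setOf_eq] at hr hz
  have e1 := const_of_fderiv_zero hU hconn.isPreconnected hG1 (r, s) hq q₀ hq₀
  have e2 := const_of_fderiv_zero hU hconn.isPreconnected hG2 (r, s) hq q₀ hq₀
  simp only at e1 e2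
  constructor
  · have hpos : (0 : ℝ) < r ^ (l5 / (2 * l4 - l5)) := Real.rpow_pos_of_pos hr _
    rw [Real.rpow_neg hr.le, mul_inv_eq_iff_eq_mul₀ hpos.ne'] at e1
    simp only
    linarith [e1]
  · have hpos : (0 : ℝ) < (l1 - l4 * s) ^ (l3 / l4) := Real.rpow_pos_of_pos hz _
    simp only
    rw [neg_div, Real.rpow_neg hz.le, eq_mul_inv_iff_mul_eq₀ hpos.ne']
    exact e2
end

section
/- Let α₁,…,α₄ and β₁,…,β₄ be real numbers with α₁β₃ − α₃β₁ ≠ 0, β₄ ≠ 0, and α₂β₄ − α₄β₂ = 0. Set α = (α₄β₃ − α₃β₄)/(α₁β₃ − α₃β₁) and β = (α₁β₄ − β₁α₄)/(α₁β₃ − α₃β₁), and assume α ≠ 0. Let U be a nonempty connected open subset of (0,∞) × ℝ and let ε : U → ℝ be smooth with ε_s > 0 on U, satisfying the four equations: α₁·ε_ss + α₃ρ·ε_ρs + (α₃ − α₄)·ε_s = 0, α₃ρ·ε_ρρ + α₁·ε_ρs + (2α₃ − α₄)·ε_ρ − α₂/ρ² = 0, β₁·ε_ss + β₃ρ·ε_ρs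 + (β₃ − β₄)·ε_s = 0, β₃ρ·ε_ρρ + β₁·ε_ρs + (2β₃ − β₄)·ε_ρ − β₂/ρ² = 0 on U. Then there exists a constant C such that for all (ρ,s) ∈ U: ρ²·ε_ρ(ρ,s) = C·(β − 1)·e^{αs}·ρ^{β} − β₂/β₄ and ε_s(ρ,s) = C·α·e^{αs}·ρ^{β−1}. -/
open Filter Topology


/-- A function with vanishing derivative on an open preconnected set is constant there. -/
lemma const_of_hasFDerivAt_zero {f : ℝ×ℝ → ℝ} {U : Set (ℝ×ℝ)} (hU : IsOpen U)
    (hp : IsPreconnected U) (hf : ∀ q ∈ U, HasFDerivAt f (0 : ℝ×ℝ →L[ℝ] ℝ) q)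
    {x y : ℝ×ℝ} (hx : x ∈ U) (hy : y ∈ U) : f x = f y := by
  haveI : PreconnectedSpace U := Subtype.preconnectedSpace hp
  have hloc : IsLocallyConstant (fun q : U => f q) := by
    rw [IsLocallyConstant.iff_exists_open]
    rintro ⟨q, hq⟩
    obtain ⟨r, hr, hball⟩ := Metric.isOpen_iff.1 hU q hq
    refine ⟨Subtype.val ⁻¹' Metric.ball q r, (Metric.isOpen_ball).preimage continuous_subtype_val,
      Metric.mem_ball_self hr, ?_⟩
    rintro ⟨z, hz⟩ hzball
    have hconv : Convex ℝ (Metric.ball q r) := convex_ball q r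
    refine hconv.is_const_of_fderivWithin_eq_zero
      (fun w hw => ((hf w (hball hw)).differentiableAt).differentiableWithinAt)
      ?_ hzball (Metric.mem_ball_self hr)
    intro w hw
    rw [fderivWithin_of_isOpen Metric.isOpen_ball hw]
    exact (hf w (hball hw)).fderiv
  exact hloc.apply_eq_of_isPreconnected isPreconnected_univ
    (Set.mem_univ (⟨x, hx⟩ : U)) (Set.mem_univ ⟨y, hy⟩)

lemma derivs_eq (ε : ℝ → ℝ → ℝ) (U : Set (ℝ × ℝ)) (hU : IsOpen U)
    (hε : ContDiffOn ℝ (⊤ : ℕ∞) (Function.uncurry ε) U) (q : ℝ × ℝ) (hq : q ∈ U) :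
    pderivR ε q.1 q.2 = fderiv ℝ (Function.uncurry ε) q (1,0) ∧
    pderivS ε q.1 q.2 = fderiv ℝ (Function.uncurry ε) q (0,1) ∧
    pderivR (pderivR ε) q.1 q.2
      = fderiv ℝ (fderiv ℝ (Function.uncurry ε)) q (1,0) (1,0) ∧
    pderivS (pderivR ε) q.1 q.2
      = fderiv ℝ (fderiv ℝ (Function.uncurry ε)) q (0,1) (1,0) ∧
    pderivS (pderivS ε) q.1 q.2
      = fderiv ℝ (fderiv ℝ (Function.uncurry ε)) q (0,1) (0,1) ∧
    fderiv ℝ (fderiv ℝ (Function.uncurry ε)) q (1,0) (0,1)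
      = fderiv ℝ (fderiv ℝ (Function.uncurry ε)) q (0,1) (1,0) := by
  set F := Function.uncurry ε with hF
  have hCA : ∀ p ∈ U, ContDiffAt ℝ (⊤ : ℕ∞) F p := fun p hp => hε.contDiffAt (hU.mem_nhds hp)
  have hdF : ∀ p ∈ U, HasFDerivAt F (fderiv ℝ F p) p := fun p hp =>
    ((hCA p hp).differentiableAt (by simp)).hasFDerivAt
  have hdF' : ∀ p ∈ U, HasFDerivAt (fderiv ℝ F) (fderiv ℝ (fderiv ℝ F) p) p := fun p hp =>
    (((hCA p hp).fderiv_right (m := (⊤ : ℕ∞)) (by simp)).differentiableAt (by simp)).hasFDerivAt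
  have curveR : ∀ p : ℝ × ℝ, HasDerivAt (fun x : ℝ => (x, p.2)) ((1:ℝ), (0:ℝ)) p.1 :=
    fun p => (hasDerivAt_id p.1).prodMk (hasDerivAt_const p.1 p.2)
  have curveS : ∀ p : ℝ × ℝ, HasDerivAt (fun y : ℝ => (p.1, y)) ((0:ℝ), (1:ℝ)) p.2 :=
    fun p => (hasDerivAt_const p.2 p.1).prodMk (hasDerivAt_id p.2)
  have h1 : ∀ p ∈ U, pderivR ε p.1 p.2 = fderiv ℝ F p (1,0) := by
    intro p hp
    have := (hdF p hp).comp_hasDerivAt p.1 (by simpa using curveR p)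
    exact this.deriv
  have h2 : ∀ p ∈ U, pderivS ε p.1 p.2 = fderiv ℝ F p (0,1) := by
    intro p hp
    have := (hdF p hp).comp_hasDerivAt p.2 (by simpa using curveS p)
    exact this.deriv
  have happ : ∀ p ∈ U, ∀ v : ℝ × ℝ, HasFDerivAt (fun z => fderiv ℝ F z v)
      ((fderiv ℝ (fderiv ℝ F) p).flip v) p := by
    intro p hp v
    have := (hdF' p hp).clm_apply (hasFDerivAt_const v p)
    simpa using this
  have memR : ∀ p ∈ U, ∀ᶠ x in 𝓝 p.1, (x, p.2) ∈ U := by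
    intro p hp
    have ht : Filter.Tendsto (fun x : ℝ => (x, p.2)) (𝓝 p.1) (𝓝 p) := by
      simpa using ((continuous_id.prodMk continuous_const).tendsto p.1)
    exact ht (hU.mem_nhds hp)
  have memS : ∀ p ∈ U, ∀ᶠ y in 𝓝 p.2, (p.1, y) ∈ U := by
    intro p hp
    have ht : Filter.Tendsto (fun y : ℝ => (p.1, y)) (𝓝 p.2) (𝓝 p) := by
      simpa using ((continuous_const.prodMk continuous_id).tendsto p.2)
    exact ht (hU.mem_nhds hp)
  have h3 : pderivR (pderivR ε) q.1 q.2 = fderiv ℝ (fderiv ℝ F) q (1,0) (1,0) := by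
    have hev : (fun x => pderivR ε x q.2) =ᶠ[𝓝 q.1] (fun x => fderiv ℝ F (x, q.2) (1,0)) := by
      filter_upwards [memR q hq] with x hx
      exact h1 (x, q.2) hx
    have hd : HasDerivAt (fun x => fderiv ℝ F (x, q.2) (1,0))
        (fderiv ℝ (fderiv ℝ F) q (1,0) (1,0)) q.1 := by
      have := (happ q hq (1,0)).comp_hasDerivAt q.1 (by simpa using curveR q)
      simpa [Function.comp_def] using this
    exact hev.deriv_eq.trans hd.deriv
  have h4 : pderivS (pderivR ε) q.1 q.2 = fderiv ℝ (fderiv ℝ F) q (0,1) (1,0) := by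
    have hev : (fun y => pderivR ε q.1 y) =ᶠ[𝓝 q.2] (fun y => fderiv ℝ F (q.1, y) (1,0)) := by
      filter_upwards [memS q hq] with y hy
      exact h1 (q.1, y) hy
    have hd : HasDerivAt (fun y => fderiv ℝ F (q.1, y) (1,0))
        (fderiv ℝ (fderiv ℝ F) q (0,1) (1,0)) q.2 := by
      have := (happ q hq (1,0)).comp_hasDerivAt q.2 (by simpa using curveS q)
      simpa [Function.comp_def] using this
    exact hev.deriv_eq.trans hd.deriv
  have h5 : pderivS (pderivS ε) q.1 q.2 = fderiv ℝ (fderiv ℝ F) q (0,1) (0,1) := by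
    have hev : (fun y => pderivS ε q.1 y) =ᶠ[𝓝 q.2] (fun y => fderiv ℝ F (q.1, y) (0,1)) := by
      filter_upwards [memS q hq] with y hy
      exact h2 (q.1, y) hy
    have hd : HasDerivAt (fun y => fderiv ℝ F (q.1, y) (0,1))
        (fderiv ℝ (fderiv ℝ F) q (0,1) (0,1)) q.2 := by
      have := (happ q hq (0,1)).comp_hasDerivAt q.2 (by simpa using curveS q)
      simpa [Function.comp_def] using this
    exact hev.deriv_eq.trans hd.deriv
  have hsymm : fderiv ℝ (fderiv ℝ F) q (1,0) (0,1) = fderiv ℝ (fderiv ℝ F) q (0,1) (1,0) := by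
    apply second_derivative_symmetric_of_eventually (f := F) (f' := fderiv ℝ F) (x := q)
    · filter_upwards [hU.mem_nhds hq] with p hp using hdF p hp
    · exact hdF' q hq
  exact ⟨h1 q hq, h2 q hq, h3, h4, h5, hsymm⟩

/-- Thermodynamic states of the Navier–Stokes system on a plane admitting a
two-dimensional commutative symmetry algebra: the invariant states have
`p = ρ²ε_ρ = C(β−1)e^{αs}ρ^β − β₂/β₄` and `T = ε_s = Cαe^{αs}ρ^{β−1}`. -/
theorem stmt_14 (a1 a2 a3 a4 b1 b2 b3 b4 al be : ℝ)
    (hdet : a1 * b3 - a3 * b1 ≠ 0) (hb4 : b4 ≠ 0)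
    (hcomm : a2 * b4 - a4 * b2 = 0)
    (hal : al = (a4 * b3 - a3 * b4) / (a1 * b3 - a3 * b1))
    (hbe : be = (a1 * b4 - b1 * a4) / (a1 * b3 - a3 * b1))
    (halne : al ≠ 0)
    (U : Set (ℝ × ℝ)) (hU : IsOpen U) (hconn : IsConnected U) (hne : U.Nonempty)
    (hUsub : U ⊆ {q : ℝ × ℝ | 0 < q.1})
    (ε : ℝ → ℝ → ℝ) (hε : ContDiffOn ℝ (⊤ : ℕ∞) (Function.uncurry ε) U)
    (hεs : ∀ q ∈ U, 0 < pderivS ε q.1 q.2)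
    (hpdeA1 : ∀ q ∈ U,
      a1 * pderivS (pderivS ε) q.1 q.2
        + a3 * q.1 * pderivS (pderivR ε) q.1 q.2
        + (a3 - a4) * pderivS ε q.1 q.2 = 0)
    (hpdeA2 : ∀ q ∈ U,
      a3 * q.1 * pderivR (pderivR ε) q.1 q.2
        + a1 * pderivS (pderivR ε) q.1 q.2
        + (2 * a3 - a4) * pderivR ε q.1 q.2 - a2 / q.1 ^ 2 = 0)
    (hpdeB1 : ∀ q ∈ U,
      b1 * pderivS (pderivS ε) q.1 q.2
        + b3 * q.1 * pderivS (pderivR ε) q.1 q.2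
        + (b3 - b4) * pderivS ε q.1 q.2 = 0)
    (hpdeB2 : ∀ q ∈ U,
      b3 * q.1 * pderivR (pderivR ε) q.1 q.2
        + b1 * pderivS (pderivR ε) q.1 q.2
        + (2 * b3 - b4) * pderivR ε q.1 q.2 - b2 / q.1 ^ 2 = 0) :
    ∃ C : ℝ, ∀ q ∈ U,
      q.1 ^ 2 * pderivR ε q.1 q.2
        = C * (be - 1) * Real.exp (al * q.2) * q.1 ^ be - b2 / b4 ∧
      pderivS ε q.1 q.2 = C * al * Real.exp (al * q.2) * q.1 ^ (be - 1) := by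
  set F := Function.uncurry ε with hF
  set c : ℝ := b2 / b4 with hcdef
  have hc : b4 * c = b2 := by rw [hcdef, mul_comm]; exact div_mul_cancel₀ b2 hb4
  have hal'' : al * (a1*b3 - a3*b1) = a4*b3 - a3*b4 := by rw [hal]; exact div_mul_cancel₀ _ hdet
  have hbe'' : be * (a1*b3 - a3*b1) = a1*b4 - b1*a4 := by rw [hbe]; exact div_mul_cancel₀ _ hdet
  -- basic smoothness facts
  have hCA : ∀ p ∈ U, ContDiffAt ℝ (⊤ : ℕ∞) F p := fun p hp => hε.contDiffAt (hU.mem_nhds hp)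
  have hdF' : ∀ p ∈ U, HasFDerivAt (fderiv ℝ F) (fderiv ℝ (fderiv ℝ F) p) p := fun p hp =>
    (((hCA p hp).fderiv_right (m := (⊤ : ℕ∞)) (by simp)).differentiableAt (by simp)).hasFDerivAt
  have happ : ∀ p ∈ U, ∀ v : ℝ × ℝ, HasFDerivAt (fun z => fderiv ℝ F z v)
      ((fderiv ℝ (fderiv ℝ F) p).flip v) p := by
    intro p hp v
    have := (hdF' p hp).clm_apply (hasFDerivAt_const v p)
    simpa using this
  -- key pointwise identities
  have key : ∀ q ∈ U,
      fderiv ℝ (fderiv ℝ F) q (0,1) (0,1) = al * fderiv ℝ F q (0,1) ∧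
      q.1 * fderiv ℝ (fderiv ℝ F) q (1,0) (0,1) = (be - 1) * fderiv ℝ F q (0,1) ∧
      q.1^2 * fderiv ℝ (fderiv ℝ F) q (0,1) (1,0)
        = al * (q.1^2 * fderiv ℝ F q (1,0) + c) ∧
      2*q.1^2 * fderiv ℝ F q (1,0) + q.1^3 * fderiv ℝ (fderiv ℝ F) q (1,0) (1,0)
        = be * (q.1^2 * fderiv ℝ F q (1,0) + c) ∧
      al * (q.1^2 * fderiv ℝ F q (1,0) + c) = (be - 1) * q.1 * fderiv ℝ F q (0,1) := by
    intro q hq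
    have hr : 0 < q.1 := hUsub hq
    have hrne : q.1 ≠ 0 := ne_of_gt hr
    obtain ⟨d1, d2, d3, d4, d5, dsym⟩ := derivs_eq ε U hU hε q hq
    set P := fderiv ℝ F q (1,0) with hP
    set T := fderiv ℝ F q (0,1) with hT
    set S11 := fderiv ℝ (fderiv ℝ F) q (1,0) (1,0) with hS11
    set S12 := fderiv ℝ (fderiv ℝ F) q (1,0) (0,1) with hS12
    set S21 := fderiv ℝ (fderiv ℝ F) q (0,1) (1,0) with hS21
    set S22 := fderiv ℝ (fderiv ℝ F) q (0,1) (0,1) with hS22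
    set r := q.1 with hrdef
    have eA1 : a1*S22 + a3*r*S21 + (a3-a4)*T = 0 := by
      have := hpdeA1 q hq; rw [d4, d5, d2] at this; linarith
    have eB1 : b1*S22 + b3*r*S21 + (b3-b4)*T = 0 := by
      have := hpdeB1 q hq; rw [d4, d5, d2] at this; linarith
    have eA2 : a3*r*S11 + a1*S21 + (2*a3-a4)*P - a2/r^2 = 0 := by
      have := hpdeA2 q hq; rw [d1, d3, d4] at this; linarith
    have eB2 : b3*r*S11 + b1*S21 + (2*b3-b4)*P - b2/r^2 = 0 := by
      have := hpdeB2 q hq; rw [d1, d3, d4] at this; linarith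
    have eA2' : (a3*r*S11 + a1*S21 + (2*a3-a4)*P) * r^2 = a2 := by
      rw [sub_eq_zero, eq_comm, div_eq_iff (pow_ne_zero 2 hrne)] at eA2
      linear_combination -eA2
    have eB2' : (b3*r*S11 + b1*S21 + (2*b3-b4)*P) * r^2 = b2 := by
      rw [sub_eq_zero, eq_comm, div_eq_iff (pow_ne_zero 2 hrne)] at eB2
      linear_combination -eB2
    have k1 : S22 = al*T := by
      have h : (a1*b3-a3*b1) * S22 = (a1*b3-a3*b1) * (al*T) := by
        linear_combination b3*eA1 - a3*eB1 - T*hal''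
      exact mul_left_cancel₀ hdet h
    have k2 : r*S12 = (be-1)*T := by
      have h : (a1*b3-a3*b1) * (r*S12) = (a1*b3-a3*b1) * ((be-1)*T) := by
        linear_combination a1*eB1 - b1*eA1 - T*hbe'' + r*(a1*b3-a3*b1)*dsym
      exact mul_left_cancel₀ hdet h
    have k3 : r^2*S21 = al*(r^2*P + c) := by
      have h : (b4*(a1*b3-a3*b1)) * (r^2*S21) = (b4*(a1*b3-a3*b1)) * (al*(r^2*P + c)) := by
        linear_combination b3*b4*eA2' - a3*b4*eB2' + b3*hcomm
          - (b4*r^2*P + b2)*hal'' - (al*(a1*b3-a3*b1))*hc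
      exact mul_left_cancel₀ (mul_ne_zero hb4 hdet) h
    have k4 : 2*r^2*P + r^3*S11 = be*(r^2*P + c) := by
      have h : (b4*(a1*b3-a3*b1)) * (2*r^2*P + r^3*S11)
          = (b4*(a1*b3-a3*b1)) * (be*(r^2*P + c)) := by
        linear_combination a1*b4*eB2' - b1*b4*eA2' - b1*hcomm
          - (b4*r^2*P + b2)*hbe'' - (be*(a1*b3-a3*b1))*hc
      exact mul_left_cancel₀ (mul_ne_zero hb4 hdet) h
    have k5 : al*(r^2*P + c) = (be-1)*r*T := by
      rw [← k3, ← dsym]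
      linear_combination r*k2
    exact ⟨k1, k2, k3, k4, k5⟩
  -- the two conserved quantities
  set H1 : ℝ×ℝ → ℝ := fun p => fderiv ℝ F p (0,1) * Real.exp (-al * p.2) * p.1 ^ ((1:ℝ)-be)
    with hH1def
  set H2 : ℝ×ℝ → ℝ := fun p => (p.1^2 * fderiv ℝ F p (1,0) + c) * Real.exp (-al * p.2)
    * p.1 ^ (-be) with hH2def
  have hexp : ∀ q : ℝ×ℝ, HasFDerivAt (fun p : ℝ×ℝ => Real.exp (-al * p.2))
      (Real.exp (-al * q.2) • ((-al) • ContinuousLinearMap.snd ℝ ℝ ℝ)) q := by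
    intro q
    exact ((hasFDerivAt_snd.const_mul (-al)).exp)
  have hrpow : ∀ (q : ℝ×ℝ) (e : ℝ), 0 < q.1 → HasFDerivAt (fun p : ℝ×ℝ => p.1 ^ e)
      ((e * q.1 ^ (e-1)) • ContinuousLinearMap.fst ℝ ℝ ℝ) q := by
    intro q e hq
    exact (Real.hasDerivAt_rpow_const (Or.inl (ne_of_gt hq))).comp_hasFDerivAt q hasFDerivAt_fst
  have hvdec : ∀ (q : ℝ×ℝ) (v : ℝ×ℝ) (w : ℝ×ℝ), fderiv ℝ (fderiv ℝ F) q v w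
      = v.1 * fderiv ℝ (fderiv ℝ F) q (1,0) w + v.2 * fderiv ℝ (fderiv ℝ F) q (0,1) w := by
    intro q v w
    have hv : v = v.1 • ((1:ℝ),(0:ℝ)) + v.2 • ((0:ℝ),(1:ℝ)) := by
      ext <;> simp
    calc fderiv ℝ (fderiv ℝ F) q v w
        = fderiv ℝ (fderiv ℝ F) q (v.1 • ((1:ℝ),(0:ℝ)) + v.2 • ((0:ℝ),(1:ℝ))) w := by rw [← hv]
      _ = (v.1 • fderiv ℝ (fderiv ℝ F) q (1,0) + v.2 • fderiv ℝ (fderiv ℝ F) q (0,1)) w := by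
          rw [map_add, map_smul, map_smul]
      _ = v.1 * fderiv ℝ (fderiv ℝ F) q (1,0) w + v.2 * fderiv ℝ (fderiv ℝ F) q (0,1) w := by
          rw [ContinuousLinearMap.add_apply, ContinuousLinearMap.smul_apply,
            ContinuousLinearMap.smul_apply, smul_eq_mul, smul_eq_mul]
  have hz1 : ∀ q ∈ U, HasFDerivAt H1 (0 : ℝ×ℝ →L[ℝ] ℝ) q := by
    intro q hq
    have hr : 0 < q.1 := hUsub hq
    obtain ⟨k1, k2, _, _, _⟩ := key q hq
    refine (((happ q hq (0,1)).mul (hexp q)).mul (hrpow q ((1:ℝ)-be) hr)).congr_fderiv ?_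
    apply ContinuousLinearMap.ext
    intro v
    have hpow1 : q.1 ^ ((1:ℝ)-be-1) = q.1 ^ (-be) := by
      rw [show (1:ℝ)-be-1 = -be by ring]
    have hpow2 : q.1 ^ ((1:ℝ)-be) = q.1 * q.1 ^ (-be) := by
      rw [show (1:ℝ)-be = 1 + -be by ring, Real.rpow_add hr, Real.rpow_one]
    simp only [ContinuousLinearMap.add_apply, ContinuousLinearMap.smul_apply,
      ContinuousLinearMap.flip_apply, ContinuousLinearMap.coe_fst', ContinuousLinearMap.coe_snd',
      ContinuousLinearMap.zero_apply, smul_eq_mul, Pi.mul_apply]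
    rw [hvdec q v ((0:ℝ),(1:ℝ)), hpow1, hpow2]
    linear_combination (v.2 * Real.exp (-al*q.2) * (q.1 * q.1 ^ (-be))) * k1
      + (v.1 * Real.exp (-al*q.2) * q.1 ^ (-be)) * k2
  have hz2 : ∀ q ∈ U, HasFDerivAt H2 (0 : ℝ×ℝ →L[ℝ] ℝ) q := by
    intro q hq
    have hr : 0 < q.1 := hUsub hq
    obtain ⟨_, _, k3, k4, _⟩ := key q hq
    have hsq : HasFDerivAt (fun p : ℝ×ℝ => p.1^2) ((2*q.1) • ContinuousLinearMap.fst ℝ ℝ ℝ) q := by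
      have h0 : HasDerivAt (fun x : ℝ => x^2) (2*q.1) q.1 := by
        simpa using hasDerivAt_pow 2 q.1
      exact h0.comp_hasFDerivAt q hasFDerivAt_fst
    refine (((((hsq.mul (happ q hq (1,0))).add_const c).mul (hexp q)).mul
      (hrpow q (-be) hr))).congr_fderiv ?_
    apply ContinuousLinearMap.ext
    intro v
    have hpow2 : q.1 ^ (-be) = q.1 * q.1 ^ (-be-1) := by
      have h := Real.rpow_add hr 1 (-be-1)
      rw [Real.rpow_one, show (1:ℝ) + (-be-1) = -be by ring] at h
      exact h
    simp only [ContinuousLinearMap.add_apply, ContinuousLinearMap.smul_apply,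
      ContinuousLinearMap.flip_apply, ContinuousLinearMap.coe_fst', ContinuousLinearMap.coe_snd',
      ContinuousLinearMap.zero_apply, smul_eq_mul, Pi.mul_apply]
    rw [hvdec q v ((1:ℝ),(0:ℝ)), hpow2]
    linear_combination (v.2 * Real.exp (-al*q.2) * (q.1 * q.1 ^ (-be-1))) * k3
      + (v.1 * Real.exp (-al*q.2) * q.1 ^ (-be-1)) * k4
  -- constancy
  obtain ⟨q0, hq0⟩ := hne
  have hH1c : ∀ q ∈ U, H1 q = H1 q0 := fun q hq =>
    const_of_hasFDerivAt_zero hU hconn.isPreconnected hz1 hq hq0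
  have hH2c : ∀ q ∈ U, H2 q = H2 q0 := fun q hq =>
    const_of_hasFDerivAt_zero hU hconn.isPreconnected hz2 hq hq0
  -- the link between the two constants
  have hK : al * H2 q0 = (be-1) * H1 q0 := by
    have hr0 : 0 < q0.1 := hUsub hq0
    obtain ⟨_, _, _, _, k5⟩ := key q0 hq0
    have hp0 : q0.1 * q0.1 ^ (-be) = q0.1 ^ ((1:ℝ)-be) := by
      rw [show (1:ℝ)-be = 1 + -be by ring, Real.rpow_add hr0, Real.rpow_one]
    simp only [hH1def, hH2def]
    linear_combination (Real.exp (-al*q0.2) * q0.1 ^ (-be)) * k5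
      + ((be-1) * (fderiv ℝ F q0 (0,1)) * Real.exp (-al*q0.2)) * hp0
  refine ⟨H1 q0 / al, ?_⟩
  intro q hq
  have hr : 0 < q.1 := hUsub hq
  obtain ⟨d1, d2, _, _, _, _⟩ := derivs_eq ε U hU hε q hq
  have he : Real.exp (-al*q.2) * Real.exp (al*q.2) = 1 := by
    rw [← Real.exp_add]; norm_num
  constructor
  · have hH := hH2c q hq
    simp only [hH2def] at hH
    have hp : q.1 ^ (-be) * q.1 ^ be = 1 := by
      rw [← Real.rpow_add hr, show -be + be = 0 by ring, Real.rpow_zero]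
    have hC : H1 q0 / al * (be-1) = H2 q0 := by
      field_simp
      linear_combination -hK
    rw [d1, hC]
    calc q.1^2 * fderiv ℝ F q (1,0)
        = (q.1^2 * fderiv ℝ F q (1,0) + c) * (Real.exp (-al*q.2) * Real.exp (al*q.2))
          * (q.1 ^ (-be) * q.1 ^ be) - c := by rw [he, hp]; ring
      _ = ((q.1^2 * fderiv ℝ F q (1,0) + c) * Real.exp (-al*q.2) * q.1 ^ (-be))
          * (Real.exp (al*q.2) * q.1 ^ be) - c := by ring
      _ = H2 q0 * Real.exp (al*q.2) * q.1 ^ be - c := by rw [hH]; ring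
  · have hH := hH1c q hq
    simp only [hH1def] at hH
    have hp : q.1 ^ ((1:ℝ)-be) * q.1 ^ (be-1) = 1 := by
      rw [← Real.rpow_add hr, show (1:ℝ)-be + (be-1) = 0 by ring, Real.rpow_zero]
    rw [d2, show H1 q0 / al * al = H1 q0 by field_simp]
    calc fderiv ℝ F q (0,1)
        = fderiv ℝ F q (0,1) * (Real.exp (-al*q.2) * Real.exp (al*q.2))
          * (q.1 ^ ((1:ℝ)-be) * q.1 ^ (be-1)) := by rw [he, hp]; ring
      _ = (fderiv ℝ F q (0,1) * Real.exp (-al*q.2) * q.1 ^ ((1:ℝ)-be))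
          * (Real.exp (al*q.2) * q.1 ^ (be-1)) := by ring
      _ = H1 q0 * Real.exp (al*q.2) * q.1 ^ (be-1) := by rw [hH]; ring
end
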